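/- arXiv:2010.06071 — 4 statements merged into one kernel-verified Lean document; each statement's English description precedes it below -/
import Mathlib

section
/- For two nonzero polynomials f₁, f₂ in two variables over ℂ, the mixed volume MV(f₁,f₂) := vol₂(N(f₁)+N(f₂)) − vol₂(N(f₁)) − vol₂(N(f₂)) is zero if and only if either the Newton polytopes N(f₁) and N(f₂) are parallel segments or at least one of N(f₁), N(f₂) is a single point. -/
open MeasureTheory Pointwise

/-- The Newton polytope of a polynomial: the convex hull of its support in `ℝⁿ`. -/
noncomputable def newtonPolytope {n : ℕ} (f : MvPolynomial (Fin n) ℂ) : Set (Fin n → ℝ) :=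
  convexHull ℝ ((fun (α : Fin n →₀ ℕ) (i : Fin n) => (α i : ℝ)) '' (f.support : Set (Fin n →₀ ℕ)))

/-- Two-dimensional volume (Lebesgue measure). -/
noncomputable def vol2 (A : Set (Fin 2 → ℝ)) : ℝ := (volume A).toReal

/-- The mixed volume of a pair of polynomials in two variables. -/
noncomputable def MV (f g : MvPolynomial (Fin 2) ℂ) : ℝ :=
  vol2 (newtonPolytope f + newtonPolytope g) - vol2 (newtonPolytope f) - vol2 (newtonPolytope g)

/-- `A` is the segment with distinct endpoints `a`, `b`. -/
def IsSeg (A : Set (Fin 2 → ℝ)) (a b : Fin 2 → ℝ) : Prop := a ≠ b ∧ A = segment ℝ a b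

/-!
Take a linear form `l`, let `a₀` maximise `l` on `A` and `b₀` minimise it on `B`. Then `A + b₀`
and `a₀ + B` lie in `A + B` on opposite sides of the line `l = l a₀ + l b₀`, so
`vol (A + B) ≥ vol A + vol B`. If `A` has interior and `B` is not a point, take `l` constant on an
edge `[p, q]` of `B` along which it is minimal: then `A + q` also lies below the line, and
`(A + q) \ (A + p)` has positive volume, so the inequality is strict. Otherwise both polytopes are
collinear, i.e. points or segments; collinear sets are null, while the sum of two non-parallel
segments is a parallelogram of positive area.
-/

open Module Set

local notation "ℝ²" => Fin 2 → ℝ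

section Collinear

variable {V : Type*} [AddCommGroup V] [Module ℝ V]

theorem collinear_segment (a b : V) : Collinear ℝ (segment ℝ a b) := by
  rw [collinear_iff_exists_forall_eq_smul_vadd]
  refine ⟨a, b - a, ?_⟩
  rintro _ ⟨s, t, -, -, hst, rfl⟩
  refine ⟨t, ?_⟩
  obtain rfl := eq_sub_of_add_eq hst
  rw [vadd_eq_add]
  module

theorem collinear_segment_add_segment {a b c d : V} {r : ℝ} (h : b - a = r • (d - c)) :
    Collinear ℝ (segment ℝ a b + segment ℝ c d) := by
  rw [collinear_iff_exists_forall_eq_smul_vadd]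
  refine ⟨a + c, d - c, ?_⟩
  rintro _ ⟨_, ⟨s, t, -, -, hst, rfl⟩, _, ⟨s', t', -, -, hst', rfl⟩, rfl⟩
  refine ⟨t * r + t', ?_⟩
  obtain rfl := eq_sub_of_add_eq hst
  obtain rfl := eq_sub_of_add_eq hst'
  obtain rfl : b = a + r • (d - c) := by rw [← h]; abel
  rw [vadd_eq_add]
  module

theorem not_collinear_segment_add_segment {a b c d : V} (hcd : c ≠ d)
    (h : ¬∃ r : ℝ, b - a = r • (d - c)) : ¬Collinear ℝ (segment ℝ a b + segment ℝ c d) := by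
  intro hc
  obtain ⟨v, hv⟩ := (collinear_iff_of_mem
    (add_mem_add (left_mem_segment ℝ a b) (left_mem_segment ℝ c d))).1 hc
  obtain ⟨r₁, hr₁⟩ := hv _ (add_mem_add (right_mem_segment ℝ a b) (left_mem_segment ℝ c d))
  obtain ⟨r₂, hr₂⟩ := hv _ (add_mem_add (left_mem_segment ℝ a b) (right_mem_segment ℝ c d))
  rw [vadd_eq_add] at hr₁ hr₂
  have hba : b - a = r₁ • v := by linear_combination (norm := module) hr₁
  have hdc : d - c = r₂ • v := by linear_combination (norm := module) hr₂
  have hr₂ : r₂ ≠ 0 := by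
    rintro rfl
    exact hcd (sub_eq_zero.1 (by rw [hdc, zero_smul])).symm
  exact h ⟨r₁ / r₂, by rw [hba, hdc, smul_smul, div_mul_cancel₀ _ hr₂]⟩

end Collinear

section NormedSpace

variable {E : Type*} [NormedAddCommGroup E] [NormedSpace ℝ E]

theorem Finset.exists_convexHull_eq_segment_of_collinear {S : Finset E}
    (hS : (S : Set E).Nontrivial) (hc : Collinear ℝ (S : Set E)) :
    ∃ a b, a ≠ b ∧ convexHull ℝ (S : Set E) = segment ℝ a b := by
  have hSne : S.Nonempty := Finset.coe_nonempty.1 hS.nonempty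
  obtain ⟨⟨p, q⟩, hpq, hmax⟩ := (S ×ˢ S).exists_max_image (fun x => dist x.1 x.2)
    (hSne.product hSne)
  rw [Finset.mem_product] at hpq
  have hmax' : ∀ x ∈ S, ∀ y ∈ S, dist x y ≤ dist p q := fun x hx y hy =>
    hmax (x, y) (Finset.mem_product.2 ⟨hx, hy⟩)
  -- `p, q` is a diametral pair, so every other point of `S` lies between them
  have hseg : (S : Set E) ⊆ segment ℝ p q := by
    intro x hx
    have hpxq : Collinear ℝ {p, x, q} :=
      hc.subset (Set.insert_subset hpq.1 (Set.insert_subset hx (Set.singleton_subset_iff.2 hpq.2)))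
    have hqp := dist_comm q p
    rcases hpxq.wbtw_or_wbtw_or_wbtw with h | h | h
    · exact h.mem_segment
    · have hxq : x = q := dist_le_zero.1 <| by
        linarith [h.dist_add_dist, hmax' x hx p hpq.1, dist_nonneg (x := q) (y := p)]
      exact hxq ▸ right_mem_segment ℝ p q
    · have hpx : p = x := dist_le_zero.1 <| by
        linarith [h.dist_add_dist, hmax' q hpq.2 x hx, dist_nonneg (x := q) (y := p)]
      exact hpx ▸ left_mem_segment ℝ p q
  refine ⟨p, q, ?_, (convexHull_min hseg (convex_segment p q)).antisymm
    (segment_subset_convexHull hpq.1 hpq.2)⟩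
  rintro rfl
  obtain ⟨x, hx, y, hy, hxy⟩ := hS
  have := hmax' x hx y hy
  rw [dist_self] at this
  exact hxy (dist_le_zero.1 this)

theorem Convex.interior_nonempty_of_not_collinear [FiniteDimensional ℝ E] {K : Set E}
    (hK : Convex ℝ K) (hE : finrank ℝ E = 2) (h : ¬Collinear ℝ K) : (interior K).Nonempty := by
  have hne : K.Nonempty := Set.nonempty_iff_ne_empty.2 fun he => h (he ▸ collinear_empty ℝ E)
  rw [hK.interior_nonempty_iff_affineSpan_eq_top,
    ← AffineSubspace.direction_eq_top_iff_of_nonempty (hne.mono (subset_affineSpan ℝ K)),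
    direction_affineSpan]
  apply Submodule.eq_top_of_finrank_eq
  rw [collinear_iff_finrank_le_one] at h
  have := Submodule.finrank_le (vectorSpan ℝ K)
  omega

variable [FiniteDimensional ℝ E] [MeasurableSpace E] (μ : Measure E) [μ.IsAddHaarMeasure]

theorem Convex.addHaar_pos_of_not_collinear {K : Set E} (hK : Convex ℝ K)
    (hE : finrank ℝ E = 2) (h : ¬Collinear ℝ K) : 0 < μ K :=
  (isOpen_interior.measure_pos μ (hK.interior_nonempty_of_not_collinear hE h)).trans_le
    (measure_mono interior_subset)

variable [BorelSpace E]

theorem Collinear.addHaar_eq_zero {s : Set E} (hs : Collinear ℝ s) (hE : 1 < finrank ℝ E) :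
    μ s = 0 := by
  refine measure_mono_null (subset_affineSpan ℝ s) (Measure.addHaar_affineSubspace μ _ ?_)
  intro htop
  have h := hs.finrank_le_one
  rw [← direction_affineSpan, htop, AffineSubspace.direction_top, finrank_top] at h
  omega

theorem ContinuousLinearMap.addHaar_setOf_apply_eq {l : E →L[ℝ] ℝ} (hl : l ≠ 0) (c : ℝ) :
    μ {x | l x = c} = 0 := by
  rcases Set.eq_empty_or_nonempty {x | l x = c} with h | ⟨x₀, hx₀⟩
  · simp [h]
  have hker : LinearMap.ker (l : E →ₗ[ℝ] ℝ) ≠ ⊤ := fun h =>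
    hl (ContinuousLinearMap.coe_injective (LinearMap.ker_eq_top.mp h))
  have hset : {x | l x = c} = x₀ +ᵥ (LinearMap.ker (l : E →ₗ[ℝ] ℝ) : Set E) := by
    ext x
    rw [Set.mem_vadd_set_iff_neg_vadd_mem]
    simp [← hx₀.out, sub_eq_zero, neg_add_eq_sub]
  rw [hset, measure_vadd]
  exact Measure.addHaar_submodule μ _ hker

theorem addHaar_vadd_diff_vadd_pos {A : Set E} (hA : Convex ℝ A) (hAc : IsCompact A)
    (hAi : (interior A).Nonempty) {p q : E} (hpq : p ≠ q) :
    0 < μ ((q +ᵥ A) \ (p +ᵥ A)) := by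
  have hqp : q - p ≠ 0 := sub_ne_zero.2 hpq.symm
  obtain ⟨g, -, hg⟩ := exists_dual_vector ℝ (q - p) (norm_ne_zero_iff.2 hqp)
  have hg_pos : 0 < g (q - p) := by rw [hg]; exact_mod_cast norm_pos_iff.2 hqp
  -- near the point `a` of `A` where `g` is maximal, `q + interior A` sticks out of `p + A`
  obtain ⟨a, ha, hmax⟩ := hAc.exists_isMaxOn (hAi.mono interior_subset) g.continuous.continuousOn
  set U := interior A ∩ {x | g a < g x + g (q - p)}
  have hU : IsOpen U := isOpen_interior.inter (isOpen_lt continuous_const (by fun_prop))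
  have hUne : U.Nonempty := by
    have ha' : a ∈ closure (interior A) := by
      rw [hA.closure_interior_eq_closure_of_nonempty_interior hAi]; exact subset_closure ha
    obtain ⟨x, hx, hxi⟩ := mem_closure_iff.1 ha' {x | g a < g x + g (q - p)}
      (isOpen_lt continuous_const (by fun_prop)) (by simpa using hg_pos)
    exact ⟨x, hxi, hx⟩
  have hsub : q +ᵥ U ⊆ (q +ᵥ A) \ (p +ᵥ A) := by
    rintro _ ⟨u, ⟨huA, hu⟩, rfl⟩
    refine ⟨Set.vadd_mem_vadd_set (interior_subset huA), ?_⟩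
    rintro ⟨a', ha', heq⟩
    have ha'_eq : a' = u + (q - p) := by
      simp only [vadd_eq_add] at heq; rw [← sub_eq_of_eq_add' heq.symm]; abel
    have hle : g a' ≤ g a := hmax ha'
    rw [ha'_eq, map_add] at hle
    exact hu.not_ge hle
  calc 0 < μ U := hU.measure_pos μ hUne
    _ = μ (q +ᵥ U) := (measure_vadd μ q U).symm
    _ ≤ _ := measure_mono hsub

theorem addHaar_add_lt_of_edge {A B : Set E} (hA : Convex ℝ A) (hAc : IsCompact A)
    (hAi : (interior A).Nonempty) (hBc : IsCompact B) {l : E →L[ℝ] ℝ} (hl : l ≠ 0) {p q : E}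
    (hp : p ∈ B) (hq : q ∈ B) (hpq : p ≠ q) (hlpq : l p = l q) (hmin : ∀ x ∈ B, l p ≤ l x) :
    μ A + μ B < μ (A + B) := by
  obtain ⟨a, ha, hmax⟩ := hAc.exists_isMaxOn (hAi.mono interior_subset) l.continuous.continuousOn
  have hXvol : μ ((p +ᵥ A) ∪ (q +ᵥ A)) = μ A + μ ((q +ᵥ A) \ (p +ᵥ A)) := by
    rw [← Set.union_sdiff_self, measure_union Set.disjoint_sdiff_right
      (((hAc.vadd q).measurableSet).diff (hAc.vadd p).measurableSet), measure_vadd]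
  set X := (p +ᵥ A) ∪ (q +ᵥ A)
  set Y := a +ᵥ B
  have hX : ∀ x ∈ X, l x ≤ l a + l p := by
    rintro _ (⟨u, hu, rfl⟩ | ⟨u, hu, rfl⟩) <;> have hu' : l u ≤ l a := hmax hu <;>
      simp only [vadd_eq_add, map_add] <;> linarith
  have hY : ∀ y ∈ Y, l a + l p ≤ l y := by
    rintro _ ⟨b, hb, rfl⟩
    simp only [vadd_eq_add, map_add]
    linarith [hmin b hb]
  have hXY : μ (X ∩ Y) = 0 :=
    measure_mono_null (fun x hx => le_antisymm (hX x hx.1) (hY x hx.2))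
      (l.addHaar_setOf_apply_eq μ hl (l a + l p))
  have hXYsub : X ∪ Y ⊆ A + B := by
    rintro _ ((⟨u, hu, rfl⟩ | ⟨u, hu, rfl⟩) | ⟨b, hb, rfl⟩)
    · show p + u ∈ A + B; rw [add_comm p u]; exact Set.add_mem_add hu hp
    · show q + u ∈ A + B; rw [add_comm q u]; exact Set.add_mem_add hu hq
    · exact Set.add_mem_add ha hb
  have hfin : μ A + μ B ≠ ⊤ := ENNReal.add_ne_top.2 ⟨hAc.measure_ne_top, hBc.measure_ne_top⟩
  calc μ A + μ B < μ A + μ B + μ ((q +ᵥ A) \ (p +ᵥ A)) :=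
        ENNReal.lt_add_right hfin (addHaar_vadd_diff_vadd_pos μ hA hAc hAi hpq).ne'
    _ = μ X + μ Y := by rw [hXvol, measure_vadd]; ring
    _ = μ (X ∪ Y) := by
        rw [← measure_union_add_inter X (hBc.vadd a).measurableSet, hXY, add_zero]
    _ ≤ μ (A + B) := measure_mono hXYsub

end NormedSpace

theorem Finset.exists_supporting_edge {S : Finset ℝ²}
    (hS : (S : Set ℝ²).Nontrivial) :
    ∃ l : ℝ² →L[ℝ] ℝ, l ≠ 0 ∧
      ∃ p ∈ S, ∃ q ∈ S, p ≠ q ∧ l p = l q ∧ ∀ x ∈ S, l p ≤ l x := by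
  obtain ⟨p, hpS, hp⟩ := S.exists_min_image (· 0) (Finset.coe_nonempty.1 hS.nonempty)
  by_cases hvert : ∃ q ∈ S, q ≠ p ∧ q 0 = p 0
  · obtain ⟨q, hqS, hqp, hq⟩ := hvert
    have hproj : (ContinuousLinearMap.proj 0 : ℝ² →L[ℝ] ℝ) ≠ 0 :=
      fun h => by simpa using congr($h (Pi.single 0 1))
    exact ⟨.proj 0, hproj, p, hpS, q, hqS, hqp.symm, hq.symm, hp⟩
  push Not at hvert
  have hlt : ∀ x ∈ S.erase p, p 0 < x 0 := fun x hx =>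
    (hp x (Finset.mem_of_mem_erase hx)).lt_of_ne' (hvert x (Finset.mem_of_mem_erase hx)
      (Finset.ne_of_mem_erase hx))
  -- among the other points, `q` minimises the slope seen from the leftmost point `p`
  obtain ⟨q, hq, hqmin⟩ := (S.erase p).exists_min_image (fun x => (x 1 - p 1) / (x 0 - p 0))
    (Finset.Nontrivial.erase_nonempty hS)
  have hq0 := hlt q hq
  set l : ℝ² →L[ℝ] ℝ := (q 0 - p 0) • .proj 1 - (q 1 - p 1) • .proj 0
  have hl_apply (x : ℝ²) : l x = (q 0 - p 0) * x 1 - (q 1 - p 1) * x 0 := rfl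
  refine ⟨l, fun h => ?_, p, hpS, q, Finset.mem_of_mem_erase hq,
    (Finset.ne_of_mem_erase hq).symm, by rw [hl_apply, hl_apply]; ring, fun x hx => ?_⟩
  · have h₁ : l (Pi.single 1 1) = q 0 - p 0 := by simp [hl_apply]
    rw [h, zero_apply] at h₁
    linarith
  · rcases eq_or_ne x p with rfl | hxp
    · exact le_rfl
    have hx' : x ∈ S.erase p := Finset.mem_erase.2 ⟨hxp, hx⟩
    have hslope := hqmin x hx'
    rw [div_le_div_iff₀ (sub_pos.2 hq0) (sub_pos.2 (hlt x hx'))] at hslope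
    rw [hl_apply, hl_apply]
    linarith

theorem volume_add_convexHull_lt {A : Set ℝ²} (hA : Convex ℝ A) (hAc : IsCompact A)
    (hA_col : ¬Collinear ℝ A) {T : Finset ℝ²} (hT : (T : Set ℝ²).Nontrivial) :
    volume A + volume (convexHull ℝ (T : Set ℝ²)) < volume (A + convexHull ℝ (T : Set ℝ²)) := by
  obtain ⟨l, hl, p, hp, q, hq, hpq, hlpq, hmin⟩ := T.exists_supporting_edge hT
  have hmin_hull : ∀ x ∈ convexHull ℝ (T : Set ℝ²), l p ≤ l x := fun x hx =>
    convexHull_min hmin (convex_halfSpace_ge (𝕜 := ℝ) l.toLinearMap.isLinear (l p)) hx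
  exact addHaar_add_lt_of_edge volume hA hAc
    (hA.interior_nonempty_of_not_collinear (finrank_fin_fun ℝ) hA_col)
    (T.finite_toSet.isCompact_convexHull ℝ) hl (subset_convexHull ℝ _ hp)
    (subset_convexHull ℝ _ hq) hpq hlpq hmin_hull

theorem volume_add_eq_of_parallel_or_singleton {A B : Set ℝ²}
    (h : (∃ a b c d, IsSeg A a b ∧ IsSeg B c d ∧ ∃ r : ℝ, b - a = r • (d - c)) ∨
      (∃ p, A = {p}) ∨ (∃ p, B = {p})) :
    volume (A + B) = volume A + volume B := by
  have hE : 1 < finrank ℝ ℝ² := by simp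
  rcases h with ⟨a, b, c, d, ⟨-, rfl⟩, ⟨-, rfl⟩, r, hr⟩ | ⟨p, rfl⟩ | ⟨p, rfl⟩
  · rw [(collinear_segment_add_segment hr).addHaar_eq_zero volume hE,
      (collinear_segment a b).addHaar_eq_zero volume hE,
      (collinear_segment c d).addHaar_eq_zero volume hE, add_zero]
  · rw [singleton_add, image_add_left, measure_preimage_add, measure_singleton, zero_add]
  · rw [add_comm, singleton_add, image_add_left, measure_preimage_add, measure_singleton,
      add_zero]

theorem parallel_or_singleton_of_volume_add_eq {A B : Set ℝ²} {S T : Finset ℝ²}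
    (hA : A = convexHull ℝ (S : Set ℝ²)) (hB : B = convexHull ℝ (T : Set ℝ²)) (hS : S.Nonempty)
    (hT : T.Nonempty) (h : volume (A + B) = volume A + volume B) :
    (∃ a b c d, IsSeg A a b ∧ IsSeg B c d ∧ ∃ r : ℝ, b - a = r • (d - c)) ∨
      (∃ p, A = {p}) ∨ (∃ p, B = {p}) := by
  rcases (S : Set ℝ²).subsingleton_or_nontrivial with hS₁ | hS₁
  · obtain ⟨p, hp⟩ := hS
    exact Or.inr (Or.inl ⟨p, by rw [hA, hS₁.eq_singleton_of_mem hp, convexHull_singleton]⟩)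
  rcases (T : Set ℝ²).subsingleton_or_nontrivial with hT₁ | hT₁
  · obtain ⟨p, hp⟩ := hT
    exact Or.inr (Or.inr ⟨p, by rw [hB, hT₁.eq_singleton_of_mem hp, convexHull_singleton]⟩)
  have hA_conv : Convex ℝ A := hA ▸ convex_convexHull ℝ _
  have hB_conv : Convex ℝ B := hB ▸ convex_convexHull ℝ _
  by_cases hA_col : Collinear ℝ A
  swap
  · have hAc : IsCompact A := hA ▸ S.finite_toSet.isCompact_convexHull ℝ
    have hlt := volume_add_convexHull_lt hA_conv hAc hA_col hT₁
    rw [← hB] at hlt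
    exact absurd h hlt.ne'
  by_cases hB_col : Collinear ℝ B
  swap
  · have hBc : IsCompact B := hB ▸ T.finite_toSet.isCompact_convexHull ℝ
    have hlt := volume_add_convexHull_lt hB_conv hBc hB_col hS₁
    rw [← hA, add_comm B, add_comm (volume B)] at hlt
    exact absurd h hlt.ne'
  obtain ⟨a, b, hab, hA_seg⟩ :=
    S.exists_convexHull_eq_segment_of_collinear hS₁ (hA_col.subset (hA ▸ subset_convexHull ℝ _))
  obtain ⟨c, d, hcd, hB_seg⟩ :=
    T.exists_convexHull_eq_segment_of_collinear hT₁ (hB_col.subset (hB ▸ subset_convexHull ℝ _))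
  rw [← hA] at hA_seg
  rw [← hB] at hB_seg
  refine Or.inl ⟨a, b, c, d, ⟨hab, hA_seg⟩, ⟨hcd, hB_seg⟩, ?_⟩
  by_contra hr
  have hpos : 0 < volume (A + B) := by
    rw [hA_seg, hB_seg]
    exact ((convex_segment a b).add (convex_segment c d)).addHaar_pos_of_not_collinear volume
      (finrank_fin_fun ℝ) (not_collinear_segment_add_segment hcd hr)
  have hE : 1 < finrank ℝ ℝ² := by simp
  rw [h, hA_col.addHaar_eq_zero volume hE, hB_col.addHaar_eq_zero volume hE, add_zero] at hpos
  exact hpos.false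

noncomputable def exponentPoints {n : ℕ} (f : MvPolynomial (Fin n) ℂ) : Finset (Fin n → ℝ) :=
  f.support.image fun α i => (α i : ℝ)

theorem newtonPolytope_eq_convexHull {n : ℕ} (f : MvPolynomial (Fin n) ℂ) :
    newtonPolytope f = convexHull ℝ (exponentPoints f : Set (Fin n → ℝ)) := by
  rw [exponentPoints, Finset.coe_image]
  rfl

theorem exponentPoints_nonempty {n : ℕ} {f : MvPolynomial (Fin n) ℂ} (hf : f ≠ 0) :
    (exponentPoints f).Nonempty :=
  (Finset.nonempty_iff_ne_empty.2 (mt MvPolynomial.support_eq_empty.1 hf)).image _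

theorem isCompact_newtonPolytope {n : ℕ} (f : MvPolynomial (Fin n) ℂ) :
    IsCompact (newtonPolytope f) := by
  rw [newtonPolytope_eq_convexHull]
  exact (exponentPoints f).finite_toSet.isCompact_convexHull ℝ

theorem MV_eq_zero_iff (f g : MvPolynomial (Fin 2) ℂ) :
    MV f g = 0 ↔ volume (newtonPolytope f + newtonPolytope g) =
      volume (newtonPolytope f) + volume (newtonPolytope g) := by
  have hf := (isCompact_newtonPolytope f).measure_ne_top (μ := volume)
  have hg := (isCompact_newtonPolytope g).measure_ne_top (μ := volume)
  have hfg := ((isCompact_newtonPolytope f).add (isCompact_newtonPolytope g)).measure_ne_top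
    (μ := volume)
  rw [MV, vol2, vol2, vol2, sub_sub, sub_eq_zero, ← ENNReal.toReal_add hf hg,
    ENNReal.toReal_eq_toReal_iff' hfg (ENNReal.add_ne_top.2 ⟨hf, hg⟩)]

theorem stmt_0 (f₁ f₂ : MvPolynomial (Fin 2) ℂ) (h₁ : f₁ ≠ 0) (h₂ : f₂ ≠ 0) :
    MV f₁ f₂ = 0 ↔
      ((∃ a b c d, IsSeg (newtonPolytope f₁) a b ∧ IsSeg (newtonPolytope f₂) c d ∧
          ∃ r : ℝ, b - a = r • (d - c)) ∨
        (∃ p, newtonPolytope f₁ = {p}) ∨ (∃ p, newtonPolytope f₂ = {p})) := by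
  rw [MV_eq_zero_iff]
  exact ⟨parallel_or_singleton_of_volume_add_eq (newtonPolytope_eq_convexHull f₁)
    (newtonPolytope_eq_convexHull f₂) (exponentPoints_nonempty h₁) (exponentPoints_nonempty h₂),
    volume_add_eq_of_parallel_or_singleton⟩
end

section
/- Let R be a unique factorization domain, let F, G be nonzero formal power series in R[[X₁,…,Xₙ]] with n ≥ 3, and let v ∈ ℕⁿ be a weight vector with positive coordinates. Assume that the v-initial parts F_v and G_v have no common divisor in R[[X₁,…,Xₙ]] other than monomials, and that the ideal generated by F_v and G_v contains no monomial. Then the ideal generated by F and G in R[[X₁,…,Xₙ]] contains no element H whose v-initial part H_v is a monomial. -/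
/-- The `v`-weighted degree of an exponent `α`. -/
noncomputable def wdeg {n : ℕ} (v : Fin n → ℕ) (α : Fin n →₀ ℕ) : ℕ := ∑ i, v i * α i

/-- The `v`-order of a power series: the minimal `v`-weighted degree on its support. -/
noncomputable def vord {n : ℕ} {R : Type*} [CommRing R] (v : Fin n → ℕ)
    (F : MvPowerSeries (Fin n) R) : ℕ :=
  sInf {w | ∃ α, MvPowerSeries.coeff α F ≠ 0 ∧ wdeg v α = w}

/-- The `v`-initial part of a power series: the sum of its terms of least `v`-weighted degree. -/
noncomputable def initPart {n : ℕ} {R : Type*} [CommRing R] (v : Fin n → ℕ)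
    (F : MvPowerSeries (Fin n) R) : MvPowerSeries (Fin n) R :=
  fun α => if wdeg v α = vord v F then MvPowerSeries.coeff α F else 0

/-- A (nonzero) monomial `c·X^α`. -/
def IsMon {n : ℕ} {R : Type*} [CommRing R] (F : MvPowerSeries (Fin n) R) : Prop :=
  ∃ (α : Fin n →₀ ℕ) (c : R), c ≠ 0 ∧ F = MvPowerSeries.monomial α c

/-!
Write `H = A F + B G` and let `d` be a common lower bound for the `v`-orders of `A F` and `B G`. The
weight-`d` component of `H` lies in `(F_v, G_v)`, so if `d = ord H` then `H_v ∈ (F_v, G_v)`.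
Otherwise that component vanishes, and the weight-`d` parts `P`, `Q` of `A`, `B` form a syzygy
`P F_v + Q G_v = 0` of homogeneous polynomials. In the UFD `R[X₁,…,Xₙ]` this forces
`m P = A₁ G_v` and `m Q = -A₁ F_v` for a monomial `m`, since `F_v` and `G_v` share only monomial
factors. Passing to `m H = (m A - A₁ G) F + (m B + A₁ F) G` raises the bound `d` by one more than
it raises `ord H`, so after finitely many steps `m · H_v ∈ (F_v, G_v)` for a monomial `m`; if `H_v`
were a monomial, so would be `m · H_v`.
-/

namespace MvPowerSeries

variable {σ R : Type*} [CommRing R] {w : σ → ℕ}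

theorem isWeightedHomogeneous_one : (1 : MvPowerSeries σ R).IsWeightedHomogeneous w 0 := by
  classical
  intro d hd
  rw [coeff_one] at hd
  split_ifs at hd with h
  · simp [h]
  · exact absurd rfl hd

theorem IsWeightedHomogeneous.neg {f : MvPowerSeries σ R} {p : ℕ}
    (hf : f.IsWeightedHomogeneous w p) : (-f).IsWeightedHomogeneous w p :=
  fun hd => hf (by simpa using hd)

theorem le_weightedOrder_mul_of_le {f g : MvPowerSeries σ R} {p q : ℕ}
    (hf : (p : ℕ∞) ≤ f.weightedOrder w) (hg : (q : ℕ∞) ≤ g.weightedOrder w) :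
    ((p + q : ℕ) : ℕ∞) ≤ (f * g).weightedOrder w := by
  push_cast
  exact (add_le_add hf hg).trans (le_weightedOrder_mul w)

theorem IsWeightedHomogeneous.le_weightedOrder {f : MvPowerSeries σ R} {p : ℕ}
    (hf : f.IsWeightedHomogeneous w p) : (p : ℕ∞) ≤ f.weightedOrder w :=
  MvPowerSeries.le_weightedOrder w fun _ hd => hf.coeff_eq_zero (by exact_mod_cast hd.ne)

theorem IsWeightedHomogeneous.weightedOrder_eq {f : MvPowerSeries σ R} {p : ℕ}
    (hf : f.IsWeightedHomogeneous w p) (h0 : f ≠ 0) : f.weightedOrder w = p := by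
  obtain ⟨d, hd⟩ := (ne_zero_iff_exists_coeff_ne_zero f).mp h0
  exact le_antisymm (hf hd ▸ weightedOrder_le w hd) hf.le_weightedOrder

theorem IsWeightedHomogeneous.weightedHomogeneousComponent_mul {f g : MvPowerSeries σ R}
    {p q : ℕ} (hf : f.IsWeightedHomogeneous w p) (hg : (q : ℕ∞) ≤ g.weightedOrder w) :
    weightedHomogeneousComponent w (p + q) (f * g) = f * weightedHomogeneousComponent w q g := by
  rw [weightedHomogeneousComponent_mul_of_le_weightedOrder hf.le_weightedOrder hg,
    ← isWeightedHomogeneous_iff_eq_weightedHomogeneousComponent.mp hf]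

theorem add_one_le_weightedOrder_of_weightedHomogeneousComponent_eq_zero
    {f : MvPowerSeries σ R} {p : ℕ} (hp : (p : ℕ∞) ≤ f.weightedOrder w)
    (h : weightedHomogeneousComponent w p f = 0) : ((p + 1 : ℕ) : ℕ∞) ≤ f.weightedOrder w := by
  refine nat_le_weightedOrder w fun d hd => ?_
  rcases (Nat.lt_succ_iff.mp hd).lt_or_eq with hlt | rfl
  · exact coeff_eq_zero_of_lt_weightedOrder w (lt_of_lt_of_le (by exact_mod_cast hlt) hp)
  · simpa [coeff_weightedHomogeneousComponent] using congrArg (coeff d) h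

theorem add_one_le_weightedOrder_mul_sub_mul {f g f' g' : MvPowerSeries σ R} {p q p' q' : ℕ}
    (hf : f.IsWeightedHomogeneous w p) (hg : (q : ℕ∞) ≤ g.weightedOrder w)
    (hf' : f'.IsWeightedHomogeneous w p') (hg' : (q' : ℕ∞) ≤ g'.weightedOrder w)
    (he : p' + q' = p + q)
    (h : f * weightedHomogeneousComponent w q g = f' * weightedHomogeneousComponent w q' g') :
    ((p + q + 1 : ℕ) : ℕ∞) ≤ (f * g - f' * g').weightedOrder w := by
  apply add_one_le_weightedOrder_of_weightedHomogeneousComponent_eq_zero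
  · rw [sub_eq_add_neg]
    refine le_trans ?_ (min_weightedOrder_le_add w)
    rw [weightedOrder_neg]
    exact le_min (le_weightedOrder_mul_of_le hf.le_weightedOrder hg)
      (he ▸ le_weightedOrder_mul_of_le hf'.le_weightedOrder hg')
  · rw [map_sub, hf.weightedHomogeneousComponent_mul hg, ← he,
      hf'.weightedHomogeneousComponent_mul hg', h, sub_self]

theorem IsWeightedHomogeneous.of_mul_left [NoZeroDivisors R] {g f : MvPowerSeries σ R} {p e : ℕ}
    (hg : g.IsWeightedHomogeneous w p) (hgf : (g * f).IsWeightedHomogeneous w e)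
    (h0 : g * f ≠ 0) : ∃ q, p + q = e ∧ f.IsWeightedHomogeneous w q := by
  have hg0 : g ≠ 0 := left_ne_zero_of_mul h0
  obtain ⟨q, hq⟩ := ENat.ne_top_iff_exists.mp
    ((weightedOrder_eq_top_iff w).not.mpr (right_ne_zero_of_mul h0))
  have hpq : p + q = e := by
    have := weightedOrder_mul w g f
    rw [hgf.weightedOrder_eq h0, hg.weightedOrder_eq hg0, ← hq] at this
    exact_mod_cast this.symm
  refine ⟨q, hpq, ?_⟩
  have hcomp : g * f = g * weightedHomogeneousComponent w q f := by
    rw [← hg.weightedHomogeneousComponent_mul hq.le, hpq,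
      ← isWeightedHomogeneous_iff_eq_weightedHomogeneousComponent.mp hgf]
  rw [mul_left_cancel₀ hg0 hcomp]
  apply isWeightedHomogeneous_weightedHomogeneousComponent

theorem IsWeightedHomogeneous.exists_coe_eq [Finite σ] (hw : ∀ i, w i ≠ 0)
    {f : MvPowerSeries σ R} {p : ℕ} (hf : f.IsWeightedHomogeneous w p) :
    ∃ φ : MvPolynomial σ R, (φ : MvPowerSeries σ R) = f := by
  have hfin := Finsupp.finite_of_nat_weight_eq w hw p
  refine ⟨truncFinset R hfin.toFinset f, ext fun d => ?_⟩
  rw [MvPolynomial.coeff_coe]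
  by_cases hd : d ∈ hfin.toFinset
  · exact coeff_truncFinset_of_mem f hd
  · rw [coeff_truncFinset_eq_zero f hd, hf.coeff_eq_zero (by simpa using hd)]

end MvPowerSeries

open MvPowerSeries

section InitialPart

variable {n : ℕ} {R : Type*} [CommRing R] {v : Fin n → ℕ}

theorem wdeg_eq_weight (v : Fin n → ℕ) (α : Fin n →₀ ℕ) : wdeg v α = Finsupp.weight v α := by
  simp [wdeg, Finsupp.weight_apply, Finsupp.sum_fintype, mul_comm]

theorem coe_vord {F : MvPowerSeries (Fin n) R} (hF : F ≠ 0) :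
    (vord v F : ℕ∞) = F.weightedOrder v := by
  have hne : {w | ∃ α, coeff α F ≠ 0 ∧ wdeg v α = w}.Nonempty := by
    obtain ⟨α, hα⟩ := (ne_zero_iff_exists_coeff_ne_zero F).mp hF
    exact ⟨_, α, hα, rfl⟩
  refine ((weightedOrder_eq_nat v).mpr ⟨?_, fun α hα => ?_⟩).symm
  · obtain ⟨α, hα, hw⟩ := Nat.sInf_mem hne
    exact ⟨α, hα, by rw [← wdeg_eq_weight, hw]; rfl⟩
  · by_contra h
    rw [← wdeg_eq_weight] at hα
    exact Nat.notMem_of_lt_sInf hα ⟨α, h, rfl⟩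

theorem vord_le_weightedOrder (F : MvPowerSeries (Fin n) R) :
    (vord v F : ℕ∞) ≤ F.weightedOrder v := by
  rcases eq_or_ne F 0 with rfl | hF
  · simp
  · exact (coe_vord hF).le

theorem initPart_eq_weightedHomogeneousComponent (v : Fin n → ℕ) (F : MvPowerSeries (Fin n) R) :
    initPart v F = weightedHomogeneousComponent v (vord v F) F := by
  ext α
  rw [coeff_weightedHomogeneousComponent, ← wdeg_eq_weight]
  rfl

theorem isWeightedHomogeneous_initPart (v : Fin n → ℕ) (F : MvPowerSeries (Fin n) R) :
    (initPart v F).IsWeightedHomogeneous v (vord v F) := by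
  rw [initPart_eq_weightedHomogeneousComponent]
  apply isWeightedHomogeneous_weightedHomogeneousComponent

theorem initPart_ne_zero {F : MvPowerSeries (Fin n) R} (hF : F ≠ 0) : initPart v F ≠ 0 := by
  rw [initPart_eq_weightedHomogeneousComponent]
  exact weightedHomogeneousComponent_of_weightedOrder (coe_vord hF)

theorem vord_mul [IsDomain R] {F G : MvPowerSeries (Fin n) R} (hF : F ≠ 0) (hG : G ≠ 0) :
    vord v (F * G) = vord v F + vord v G := by
  have h := weightedOrder_mul v F G
  rw [← coe_vord hF, ← coe_vord hG, ← coe_vord (mul_ne_zero hF hG)] at h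
  exact_mod_cast h

theorem initPart_mul [IsDomain R] {F G : MvPowerSeries (Fin n) R} (hF : F ≠ 0) (hG : G ≠ 0) :
    initPart v (F * G) = initPart v F * initPart v G := by
  simp only [initPart_eq_weightedHomogeneousComponent, vord_mul hF hG]
  exact weightedHomogeneousComponent_mul_of_le_weightedOrder (vord_le_weightedOrder F)
    (vord_le_weightedOrder G)

theorem MvPowerSeries.IsWeightedHomogeneous.vord_eq {F : MvPowerSeries (Fin n) R} {p : ℕ}
    (hF : F.IsWeightedHomogeneous v p) (h0 : F ≠ 0) : vord v F = p := by
  have h := hF.weightedOrder_eq h0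
  rw [← coe_vord h0] at h
  exact_mod_cast h

theorem MvPowerSeries.IsWeightedHomogeneous.initPart_eq {F : MvPowerSeries (Fin n) R} {p : ℕ}
    (hF : F.IsWeightedHomogeneous v p) : initPart v F = F := by
  rcases eq_or_ne F 0 with rfl | h0
  · simp [initPart_eq_weightedHomogeneousComponent]
  · rw [initPart_eq_weightedHomogeneousComponent, hF.vord_eq h0,
      ← isWeightedHomogeneous_iff_eq_weightedHomogeneousComponent.mp hF]

end InitialPart

section Monomial

variable {n : ℕ} {R : Type*} [CommRing R]

theorem isMon_one [Nontrivial R] : IsMon (1 : MvPowerSeries (Fin n) R) :=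
  ⟨0, 1, one_ne_zero, monomial_zero_one.symm⟩

theorem IsMon.mul [NoZeroDivisors R] {m m' : MvPowerSeries (Fin n) R} (hm : IsMon m)
    (hm' : IsMon m') : IsMon (m * m') := by
  obtain ⟨α, c, hc, rfl⟩ := hm
  obtain ⟨α', c', hc', rfl⟩ := hm'
  exact ⟨α + α', c * c', mul_ne_zero hc hc', monomial_mul_monomial α α' c c'⟩

theorem IsMon.ne_zero {m : MvPowerSeries (Fin n) R} (hm : IsMon m) : m ≠ 0 := by
  obtain ⟨α, c, hc, rfl⟩ := hm
  exact fun h => hc (by simpa using congrArg (coeff α) h)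

theorem IsMon.exists_isWeightedHomogeneous (v : Fin n → ℕ) {m : MvPowerSeries (Fin n) R}
    (hm : IsMon m) : ∃ μ, m.IsWeightedHomogeneous v μ := by
  classical
  obtain ⟨α, c, -, rfl⟩ := hm
  refine ⟨Finsupp.weight v α, fun {β} hβ => ?_⟩
  rw [coeff_monomial] at hβ
  split_ifs at hβ with h
  · rw [h]
  · exact absurd rfl hβ

end Monomial

section Syzygy

variable {n : ℕ} {R : Type*} [CommRing R] [IsDomain R] {v : Fin n → ℕ}
  {F G : MvPowerSeries (Fin n) R}

theorem exists_isMon_mul_eq_mul [UniqueFactorizationMonoid R] {p q f g : MvPolynomial (Fin n) R}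
    (hdiv : ∀ D : MvPowerSeries (Fin n) R, D ∣ f → D ∣ g → IsUnit D ∨ IsMon D)
    (hp : p ≠ 0) (h : p * f + q * g = 0) :
    ∃ m A : MvPowerSeries (Fin n) R, IsMon m ∧ m * p = A * g := by
  obtain ⟨a, g', c, hrel, rfl, rfl⟩ := UniqueFactorizationMonoid.exists_reduced_factors _ hp g
  -- `g'` is the part of `g` coprime to `p`, so the syzygy makes it a common divisor of `f` and `g`.
  have hc : c ≠ 0 := left_ne_zero_of_mul hp
  have hg'f : g' ∣ f :=
    hrel.symm.dvd_of_dvd_mul_left ⟨-q, mul_left_cancel₀ hc (by linear_combination h)⟩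
  obtain ⟨m, hm, k, hk⟩ : ∃ m, IsMon m ∧ (g' : MvPowerSeries (Fin n) R) ∣ m := by
    rcases hdiv g' (map_dvd MvPolynomial.coeToMvPowerSeries.ringHom hg'f)
        (map_dvd MvPolynomial.coeToMvPowerSeries.ringHom (dvd_mul_left g' c)) with hu | hm
    · exact ⟨1, isMon_one, hu.dvd⟩
    · exact ⟨g', hm, dvd_rfl⟩
  refine ⟨m, k * a, hm, ?_⟩
  rw [hk]
  push_cast
  ring

theorem exists_isMon_mul_eq_mul_initPart [UniqueFactorizationMonoid R] (hv : ∀ i, 0 < v i)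
    (hG : G ≠ 0)
    (hdiv : ∀ D : MvPowerSeries (Fin n) R,
      D ∣ initPart v F → D ∣ initPart v G → IsUnit D ∨ IsMon D)
    {P Q : MvPowerSeries (Fin n) R} {a b : ℕ} (hP : P.IsWeightedHomogeneous v a)
    (hQ : Q.IsWeightedHomogeneous v b) (hP0 : P ≠ 0)
    (h : P * initPart v F + Q * initPart v G = 0) :
    ∃ (m A : MvPowerSeries (Fin n) R) (μ c : ℕ), IsMon m ∧ m.IsWeightedHomogeneous v μ ∧
      A.IsWeightedHomogeneous v c ∧ c + vord v G = μ + a ∧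
      m * P = A * initPart v G ∧ m * Q = -(A * initPart v F) := by
  have hw : ∀ i, v i ≠ 0 := fun i => (hv i).ne'
  obtain ⟨p, rfl⟩ := hP.exists_coe_eq hw
  obtain ⟨q, rfl⟩ := hQ.exists_coe_eq hw
  have hFv : (initPart v F).IsWeightedHomogeneous v (vord v F) :=
    isWeightedHomogeneous_initPart v F
  have hGv : (initPart v G).IsWeightedHomogeneous v (vord v G) :=
    isWeightedHomogeneous_initPart v G
  obtain ⟨f, hf⟩ := hFv.exists_coe_eq hw
  obtain ⟨g, hg⟩ := hGv.exists_coe_eq hw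
  rw [← hf, ← hg] at hdiv
  have hpoly : p * f + q * g = 0 := MvPolynomial.coe_injective (Fin n) R <| by
    push_cast
    rw [hf, hg, h]
  obtain ⟨m, A, hm, hmA⟩ := exists_isMon_mul_eq_mul hdiv (by rintro rfl; simp at hP0) hpoly
  rw [hg] at hmA
  obtain ⟨μ, hmμ⟩ := hm.exists_isWeightedHomogeneous v
  have hA : (initPart v G * A).IsWeightedHomogeneous v (μ + a) := by
    rw [mul_comm, ← hmA]
    exact hmμ.mul hP
  obtain ⟨c, hc, hAc⟩ := hGv.of_mul_left hA
    (by rw [mul_comm, ← hmA]; exact mul_ne_zero hm.ne_zero hP0)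
  refine ⟨m, A, μ, c, hm, hmμ, hAc, by omega, hmA, ?_⟩
  apply mul_left_cancel₀ (initPart_ne_zero hG)
  linear_combination (m : MvPowerSeries (Fin n) R) * h - initPart v F * hmA

theorem weightedHomogeneousComponent_mul_eq_zero_or {A : MvPowerSeries (Fin n) R} {d : ℕ}
    (hd : (d : ℕ∞) ≤ (A * F).weightedOrder v) :
    weightedHomogeneousComponent v d (A * F) = 0 ∨
      ∃ a : ℕ, (a : ℕ∞) ≤ A.weightedOrder v ∧ a + vord v F = d ∧
        weightedHomogeneousComponent v d (A * F) =
          weightedHomogeneousComponent v a A * initPart v F := by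
  rcases hd.lt_or_eq with hlt | heq
  · exact Or.inl (weightedHomogeneousComponent_of_lt_weightedOrder_eq_zero hlt)
  have hAF : A * F ≠ 0 := by
    rintro h
    simp [h] at heq
  have hA := left_ne_zero_of_mul hAF
  have hF := right_ne_zero_of_mul hAF
  have had : vord v A + vord v F = d := by
    rw [← vord_mul hA hF]
    exact_mod_cast (coe_vord hAF).trans heq.symm
  refine Or.inr ⟨vord v A, vord_le_weightedOrder A, had, ?_⟩
  rw [← had, initPart_eq_weightedHomogeneousComponent]
  exact weightedHomogeneousComponent_mul_of_le_weightedOrder (vord_le_weightedOrder A)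
    (vord_le_weightedOrder F)

theorem weightedHomogeneousComponent_mul_mem_span {A : MvPowerSeries (Fin n) R} {d : ℕ}
    (hd : (d : ℕ∞) ≤ (A * F).weightedOrder v) :
    weightedHomogeneousComponent v d (A * F) ∈ Ideal.span {initPart v F} := by
  rcases weightedHomogeneousComponent_mul_eq_zero_or hd with h | ⟨a, -, -, h⟩ <;> rw [h]
  · exact Ideal.zero_mem _
  · exact Ideal.mul_mem_left _ _ (Ideal.mem_span_singleton_self _)

theorem exists_isMon_mul_eq_add_mul_of_component_eq_zero [UniqueFactorizationMonoid R]
    (hv : ∀ i, 0 < v i) (hG : G ≠ 0)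
    (hdiv : ∀ D : MvPowerSeries (Fin n) R,
      D ∣ initPart v F → D ∣ initPart v G → IsUnit D ∨ IsMon D)
    {A B : MvPowerSeries (Fin n) R} {d : ℕ} (hA : (d : ℕ∞) ≤ (A * F).weightedOrder v)
    (hB : (d : ℕ∞) ≤ (B * G).weightedOrder v)
    (h : weightedHomogeneousComponent v d (A * F) + weightedHomogeneousComponent v d (B * G) = 0) :
    ∃ (m A' B' : MvPowerSeries (Fin n) R) (μ : ℕ), IsMon m ∧ m.IsWeightedHomogeneous v μ ∧
      A' * F + B' * G = m * (A * F + B * G) ∧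
      ((d + μ + 1 : ℕ) : ℕ∞) ≤ (A' * F).weightedOrder v ∧
      ((d + μ + 1 : ℕ) : ℕ∞) ≤ (B' * G).weightedOrder v := by
  by_cases hz : weightedHomogeneousComponent v d (A * F) = 0
  · rw [hz, zero_add] at h
    exact ⟨1, A, B, 0, isMon_one, isWeightedHomogeneous_one, by ring,
      add_one_le_weightedOrder_of_weightedHomogeneousComponent_eq_zero hA hz,
      add_one_le_weightedOrder_of_weightedHomogeneousComponent_eq_zero hB h⟩
  obtain ⟨a, ha, had, hAF⟩ := (weightedHomogeneousComponent_mul_eq_zero_or hA).resolve_left hz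
  obtain ⟨b, hb, hbd, hBG⟩ := (weightedHomogeneousComponent_mul_eq_zero_or hB).resolve_left
    fun h' => hz (by rwa [h', add_zero] at h)
  rw [hAF, hBG] at h
  rw [hAF] at hz
  obtain ⟨m, A₁, μ, c, hm, hmμ, hA₁, hc, hmP, hmQ⟩ := exists_isMon_mul_eq_mul_initPart hv hG hdiv
    (isWeightedHomogeneous_weightedHomogeneousComponent v A a)
    (isWeightedHomogeneous_weightedHomogeneousComponent v B b) (left_ne_zero_of_mul hz) h
  refine ⟨m, m * A - A₁ * G, m * B - -A₁ * F, μ, hm, hmμ, by ring, ?_, ?_⟩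
  · have hA' := add_one_le_weightedOrder_mul_sub_mul hmμ ha hA₁ (vord_le_weightedOrder G) hc
      (by rwa [← initPart_eq_weightedHomogeneousComponent])
    convert le_weightedOrder_mul_of_le hA' (vord_le_weightedOrder F) using 2
    omega
  · have hB' := add_one_le_weightedOrder_mul_sub_mul hmμ hb hA₁.neg (vord_le_weightedOrder F)
      (by omega) (by rwa [← initPart_eq_weightedHomogeneousComponent, neg_mul])
    convert le_weightedOrder_mul_of_le hB' (vord_le_weightedOrder G) using 2
    omega

theorem exists_isMon_mul_initPart_mem_span [UniqueFactorizationMonoid R] (hv : ∀ i, 0 < v i)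
    (hG : G ≠ 0)
    (hdiv : ∀ D : MvPowerSeries (Fin n) R,
      D ∣ initPart v F → D ∣ initPart v G → IsUnit D ∨ IsMon D) (k : ℕ) :
    ∀ {A B : MvPowerSeries (Fin n) R} {d : ℕ}, (d : ℕ∞) ≤ (A * F).weightedOrder v →
      (d : ℕ∞) ≤ (B * G).weightedOrder v → A * F + B * G ≠ 0 → vord v (A * F + B * G) = d + k →
      ∃ m, IsMon m ∧ m * initPart v (A * F + B * G) ∈ Ideal.span {initPart v F, initPart v G} := by
  induction k with
  | zero =>
    intro A B d hA hB _ hk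
    refine ⟨1, isMon_one, ?_⟩
    rw [one_mul, initPart_eq_weightedHomogeneousComponent v (A * F + B * G), hk, add_zero,
      map_add]
    exact Ideal.add_mem _
      (Ideal.span_mono (by simp) (weightedHomogeneousComponent_mul_mem_span hA))
      (Ideal.span_mono (by simp) (weightedHomogeneousComponent_mul_mem_span hB))
  | succ k ih =>
    intro A B d hA hB hH hk
    have hd : weightedHomogeneousComponent v d (A * F + B * G) = 0 := by
      apply weightedHomogeneousComponent_of_lt_weightedOrder_eq_zero
      rw [← coe_vord hH, hk]
      exact_mod_cast Nat.lt_add_of_pos_right k.succ_pos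
    rw [map_add] at hd
    obtain ⟨m, A', B', μ, hm, hmμ, hH', hA', hB'⟩ :=
      exists_isMon_mul_eq_add_mul_of_component_eq_zero hv hG hdiv hA hB hd
    have hm0 := hm.ne_zero
    obtain ⟨m', hm', hmem⟩ := ih hA' hB' (hH' ▸ mul_ne_zero hm0 hH)
      (by rw [hH', vord_mul hm0 hH, hmμ.vord_eq hm0, hk]; ring)
    rw [hH', initPart_mul hm0 hH, hmμ.initPart_eq, ← mul_assoc] at hmem
    exact ⟨m' * m, hm'.mul hm, hmem⟩

end Syzygy

theorem stmt_2_general (R : Type*) [CommRing R] [IsDomain R] [UniqueFactorizationMonoid R]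
    (n : ℕ) (F G : MvPowerSeries (Fin n) R) (hG : G ≠ 0)
    (v : Fin n → ℕ) (hv : ∀ i, 0 < v i)
    (hdiv : ∀ D : MvPowerSeries (Fin n) R,
      D ∣ initPart v F → D ∣ initPart v G → IsUnit D ∨ IsMon D)
    (hmon : ∀ H ∈ Ideal.span {initPart v F, initPart v G}, ¬ IsMon H) :
    ∀ H ∈ Ideal.span {F, G}, ¬ IsMon (initPart v H) := by
  intro H hH hHv
  obtain ⟨A, B, rfl⟩ := Ideal.mem_span_pair.mp hH
  have hH0 : A * F + B * G ≠ 0 := by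
    intro h
    rw [h, initPart_eq_weightedHomogeneousComponent, map_zero] at hHv
    exact hHv.ne_zero rfl
  obtain ⟨m, hm, hmem⟩ := exists_isMon_mul_initPart_mem_span hv hG hdiv _ (by simp)
    (by simp) hH0 (zero_add _).symm
  exact hmon _ hmem (hm.mul hHv)

theorem stmt_2 (R : Type*) [CommRing R] [IsDomain R] [UniqueFactorizationMonoid R]
    (n : ℕ) (hn : 3 ≤ n) (F G : MvPowerSeries (Fin n) R) (hF : F ≠ 0) (hG : G ≠ 0)
    (v : Fin n → ℕ) (hv : ∀ i, 0 < v i)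
    (hdiv : ∀ D : MvPowerSeries (Fin n) R,
      D ∣ initPart v F → D ∣ initPart v G → IsUnit D ∨ IsMon D)
    (hmon : ∀ H ∈ Ideal.span {initPart v F, initPart v G}, ¬ IsMon H) :
    ∀ H ∈ Ideal.span {F, G}, ¬ IsMon (initPart v H) :=
  stmt_2_general R n F G hG v hv hdiv hmon
end

section
/- Let F ∈ ℂ[x,y,z] be homogeneous of degree α > 0 that can be written F = P²·R + c·x^α where P, R ∈ ℂ[x,y,z] are homogeneous, P is not a monomial, c ∈ ℂ, and F depends essentially on all three variables (so that N(F) is 2-dimensional). Then there exists an edge T of the Newton polytope N(F) and a weight vector v ∈ ℤ³ supporting N(F) along T such that F_v = (P_v)²·R_v; in particular F_v has a multiple non-monomial factor. -/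
/-!
Pick an exponent `γ` of `P²R` whose `(y, z)`-projection is not parallel to that of some
difference of two exponents of `P`; if there were none, all exponents of `F` (including that of
`x^a`, which projects to `0`) would lie on one line. Starting from the weight `-(0, γ₁, γ₂)` and
turning it towards `(0, -γ₂, γ₁)` until a second exponent of `P` becomes minimal gives a weight
`v` with `v₀ = 0`, `v·γ < 0` and `P_v` not a monomial. Since `v·(a, 0, 0) = 0 > v·γ`, the term
`c x^a` does not reach the initial form, so `F_v = (P²R)_v = P_v² R_v`. The face of `N(F)` cut
out by `v` is `N(F_v)`; as `F_v` is homogeneous and `v`-homogeneous with `v` not a multiple of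
`(1, 1, 1)`, it lies on a line, and it has at least two points, so it is an edge.
-/

open MvPolynomial

/-- The Newton polytope of a polynomial in three variables. -/
noncomputable def newtonPolytope3 (f : MvPolynomial (Fin 3) ℂ) : Set (Fin 3 → ℝ) :=
  convexHull ℝ ((fun (α : Fin 3 →₀ ℕ) (i : Fin 3) => (α i : ℝ)) '' (f.support : Set (Fin 3 →₀ ℕ)))

/-- `v`-weighted degree (integer weights) of an exponent. -/
def zwdeg (v : Fin 3 → ℤ) (α : Fin 3 →₀ ℕ) : ℤ := ∑ i, v i * (α i : ℤ)

/-- The `v`-initial part of a polynomial: the sum of its terms of minimal `v`-weighted degree. -/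
noncomputable def pInit (v : Fin 3 → ℤ) (F : MvPolynomial (Fin 3) ℂ) : MvPolynomial (Fin 3) ℂ :=
  ∑ α ∈ F.support, if ∀ β ∈ F.support, zwdeg v α ≤ zwdeg v β
    then MvPolynomial.monomial α (MvPolynomial.coeff α F) else 0

/-- The face of a set `C ⊆ ℝ³` supported by the (inward) vector `v`. -/
def faceOf (v : Fin 3 → ℤ) (C : Set (Fin 3 → ℝ)) : Set (Fin 3 → ℝ) :=
  {x ∈ C | ∀ y ∈ C, ∑ i, (v i : ℝ) * x i ≤ ∑ i, (v i : ℝ) * y i}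

/-- A monomial `c·x^a y^b z^c`. -/
def IsMonP3 (P : MvPolynomial (Fin 3) ℂ) : Prop :=
  ∃ (α : Fin 3 →₀ ℕ) (c : ℂ), P = MvPolynomial.monomial α c

section InitialForm

variable {v : Fin 3 → ℤ} {F G H A B : MvPolynomial (Fin 3) ℂ}

lemma zwdeg_add (v : Fin 3 → ℤ) (α β : Fin 3 →₀ ℕ) :
    zwdeg v (α + β) = zwdeg v α + zwdeg v β := by
  simp [zwdeg, Finset.sum_add_distrib, mul_add]

lemma zwdeg_neg (v : Fin 3 → ℤ) (α : Fin 3 →₀ ℕ) : zwdeg (-v) α = -zwdeg v α := by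
  simp [zwdeg]

lemma zwdeg_single_one (i : Fin 3) (α : Fin 3 →₀ ℕ) : zwdeg (Pi.single i 1) α = α i := by
  simp [zwdeg, Pi.single_apply]

lemma zwdeg_smul_add_smul (D E : ℤ) (u u' : Fin 3 → ℤ) (α : Fin 3 →₀ ℕ) :
    zwdeg (D • u + E • u') α = D * zwdeg u α + E * zwdeg u' α := by
  simp [zwdeg, Finset.sum_add_distrib, Finset.mul_sum, add_mul, mul_assoc]

lemma coeff_pInit (α : Fin 3 →₀ ℕ) :
    coeff α (pInit v F) =
      if ∀ β ∈ F.support, zwdeg v α ≤ zwdeg v β then coeff α F else 0 := by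
  rw [pInit, coeff_sum, Finset.sum_eq_single α]
  · split_ifs <;> simp
  · intro β _ hβα
    split_ifs <;> simp [coeff_monomial, hβα]
  · intro hα
    simp [notMem_support_iff.mp hα]

lemma mem_support_pInit {α : Fin 3 →₀ ℕ} :
    α ∈ (pInit v F).support ↔ α ∈ F.support ∧ ∀ β ∈ F.support, zwdeg v α ≤ zwdeg v β := by
  rw [mem_support_iff, coeff_pInit, mem_support_iff]
  by_cases h : ∀ β ∈ F.support, zwdeg v α ≤ zwdeg v β
  · rw [if_pos h, and_iff_left h]
  · rw [if_neg h]
    exact ⟨fun h0 => absurd rfl h0, fun h' => absurd h'.2 h⟩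

lemma pInit_ne_zero (hF : F ≠ 0) : pInit v F ≠ 0 := by
  obtain ⟨α, hα, hmin⟩ := F.support.exists_min_image (zwdeg v) (support_nonempty.mpr hF)
  exact ne_zero_iff.mpr ⟨α, mem_support_iff.mp (mem_support_pInit.mpr ⟨hα, hmin⟩)⟩

lemma isHomogeneous_pInit {n : ℕ} (hF : F.IsHomogeneous n) : (pInit v F).IsHomogeneous n :=
  fun _ hα => hF (mem_support_iff.mp (mem_support_pInit.mp (mem_support_iff.mpr hα)).1)

lemma exists_weight_pInit (hF : F ≠ 0) : ∃ d : ℤ,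
    (∀ α ∈ (pInit v F).support, zwdeg v α = d) ∧ (∀ α ∈ F.support, d ≤ zwdeg v α) ∧
      ∀ α ∈ (F - pInit v F).support, d < zwdeg v α := by
  obtain ⟨α₀, hα₀, hmin⟩ := F.support.exists_min_image (zwdeg v) (support_nonempty.mpr hF)
  refine ⟨zwdeg v α₀, fun α hα => ?_, hmin, fun α hα => ?_⟩
  · obtain ⟨hαF, hαmin⟩ := mem_support_pInit.mp hα
    exact le_antisymm (hαmin α₀ hα₀) (hmin α hαF)
  · rw [mem_support_iff, coeff_sub, coeff_pInit] at hα
    split_ifs at hα with hαmin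
    · simp at hα
    · have hαF : α ∈ F.support := mem_support_iff.mpr (by simpa using hα)
      refine (hmin α hαF).lt_of_ne fun h => hαmin fun β hβ => ?_
      rw [← h]
      exact hmin β hβ

lemma pInit_eq_of_add {d : ℤ} (hFAB : F = A + B) (hA : A ≠ 0)
    (hdA : ∀ α ∈ A.support, zwdeg v α = d) (hdB : ∀ α ∈ B.support, d < zwdeg v α) :
    pInit v F = A := by
  have hBA : ∀ α ∈ A.support, coeff α B = 0 := fun α hα =>
    notMem_support_iff.mp fun hB => (hdB α hB).ne' (hdA α hα)
  subst hFAB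
  ext α
  rw [coeff_pInit, coeff_add]
  by_cases hαA : α ∈ A.support
  · rw [hBA α hαA, add_zero, if_pos]
    intro β hβ
    rw [hdA α hαA]
    rcases Finset.mem_union.mp (support_add hβ) with h | h
    · exact (hdA β h).ge
    · exact (hdB β h).le
  · rw [notMem_support_iff.mp hαA, zero_add]
    by_cases hαB : α ∈ B.support
    · obtain ⟨α₀, hα₀⟩ := support_nonempty.mpr hA
      have hα₀F : α₀ ∈ (A + B).support := by
        rw [mem_support_iff, coeff_add, hBA α₀ hα₀, add_zero]
        exact mem_support_iff.mp hα₀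
      rw [if_neg fun hmin => ?_]
      linarith [hmin α₀ hα₀F, hdA α₀ hα₀, hdB α hαB]
    · simp [notMem_support_iff.mp hαB]

lemma lt_zwdeg_of_mem_support_mul {a b : ℤ} (hA : ∀ α ∈ A.support, a ≤ zwdeg v α)
    (hB : ∀ β ∈ B.support, b < zwdeg v β) : ∀ γ ∈ (A * B).support, a + b < zwdeg v γ := by
  intro γ hγ
  obtain ⟨α, hα, β, hβ, rfl⟩ := Finset.mem_add.mp (support_mul A B hγ)
  rw [zwdeg_add]
  exact add_lt_add_of_le_of_lt (hA α hα) (hB β hβ)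

lemma pInit_mul (hG : G ≠ 0) (hH : H ≠ 0) : pInit v (G * H) = pInit v G * pInit v H := by
  obtain ⟨dG, hG₀, -, hG₁⟩ := exists_weight_pInit (v := v) hG
  obtain ⟨dH, hH₀, hHle, hH₁⟩ := exists_weight_pInit (v := v) hH
  refine pInit_eq_of_add (B := pInit v G * (H - pInit v H) + (G - pInit v G) * H) (by ring)
    (mul_ne_zero (pInit_ne_zero hG) (pInit_ne_zero hH)) (d := dG + dH) ?_ ?_
  · intro γ hγ
    obtain ⟨α, hα, β, hβ, rfl⟩ := Finset.mem_add.mp (support_mul _ _ hγ)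
    rw [zwdeg_add, hG₀ α hα, hH₀ β hβ]
  · intro γ hγ
    rcases Finset.mem_union.mp (support_add hγ) with h | h
    · exact lt_zwdeg_of_mem_support_mul (fun α hα => (hG₀ α hα).ge) hH₁ γ h
    · rw [mul_comm] at h
      rw [add_comm]
      exact lt_zwdeg_of_mem_support_mul hHle hG₁ γ h

lemma pInit_add_of_lt (hG : G ≠ 0) (hH : ∀ β ∈ H.support, ∃ γ ∈ G.support, zwdeg v γ < zwdeg v β) :
    pInit v (G + H) = pInit v G := by
  obtain ⟨d, h₀, hle, h₁⟩ := exists_weight_pInit (v := v) hG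
  refine pInit_eq_of_add (B := (G - pInit v G) + H) (by ring) (pInit_ne_zero hG) h₀ fun α hα => ?_
  rcases Finset.mem_union.mp (support_add hα) with h | h
  · exact h₁ α h
  · obtain ⟨γ, hγ, hlt⟩ := hH α h
    exact (hle γ hγ).trans_lt hlt

lemma exists_mem_support_mul_zwdeg_eq (v : Fin 3 → ℤ) (hG : G ≠ 0) (hH : H ≠ 0) :
    ∃ dG dH : ℤ, (∀ α ∈ G.support, dG ≤ zwdeg v α) ∧ (∀ β ∈ H.support, dH ≤ zwdeg v β) ∧
      ∃ γ ∈ (G * H).support, zwdeg v γ = dG + dH := by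
  obtain ⟨dG, hG₀, hGle, -⟩ := exists_weight_pInit (v := v) hG
  obtain ⟨dH, hH₀, hHle, -⟩ := exists_weight_pInit (v := v) hH
  obtain ⟨γ, hγ⟩ := support_nonempty.mpr (pInit_ne_zero (v := v) (mul_ne_zero hG hH))
  refine ⟨dG, dH, hGle, hHle, γ, (mem_support_pInit.mp hγ).1, ?_⟩
  rw [pInit_mul hG hH] at hγ
  obtain ⟨α, hα, β, hβ, rfl⟩ := Finset.mem_add.mp (support_mul _ _ hγ)
  rw [zwdeg_add, hG₀ α hα, hH₀ β hβ]

lemma isMonP3_iff_card_support_le_one : IsMonP3 F ↔ F.support.card ≤ 1 := by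
  rw [Finset.card_le_one_iff_subset_singleton]
  constructor
  · rintro ⟨α, c, rfl⟩
    exact ⟨α, support_monomial_subset⟩
  · rintro ⟨α, hα⟩
    exact ⟨α, _, eq_monomial_of_support_subset_singleton fun β hβ =>
      Finset.mem_singleton.mp (hα hβ)⟩

lemma not_isMonP3_iff : ¬ IsMonP3 F ↔ ∃ α ∈ F.support, ∃ β ∈ F.support, α ≠ β := by
  rw [isMonP3_iff_card_support_le_one, not_le, Finset.one_lt_card]

lemma not_isMonP3_mul (hG : ¬ IsMonP3 G) (hH : H ≠ 0) : ¬ IsMonP3 (G * H) := by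
  obtain ⟨α, hα, β, hβ, hαβ⟩ := not_isMonP3_iff.mp hG
  have hG0 : G ≠ 0 := by rintro rfl; simp at hα
  obtain ⟨i, hi⟩ : ∃ i, α i ≠ β i := by
    by_contra! h
    exact hαβ (Finsupp.ext h)
  -- The least and the largest `x_i`-degree of `G * H` are the sums of those of `G` and `H`,
  -- and for `G` they differ.
  obtain ⟨dG, dH, hdG, hdH, γ, hγ, hγw⟩ := exists_mem_support_mul_zwdeg_eq (Pi.single i 1) hG0 hH
  obtain ⟨d'G, d'H, hd'G, hd'H, γ', hγ', hγ'w⟩ :=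
    exists_mem_support_mul_zwdeg_eq (-Pi.single i 1) hG0 hH
  obtain ⟨η, hη⟩ := support_nonempty.mpr hH
  simp only [zwdeg_neg, zwdeg_single_one] at hdG hdH hγw hd'G hd'H hγ'w
  refine not_isMonP3_iff.mpr ⟨γ, hγ, γ', hγ', fun h => ?_⟩
  subst h
  have hGα := hdG α hα
  have hGβ := hdG β hβ
  have hG'α := hd'G α hα
  have hG'β := hd'G β hβ
  have hHη := hdH η hη
  have hH'η := hd'H η hη
  omega

end InitialForm

section Convex

variable {E : Type*} [AddCommGroup E] [Module ℝ E]

lemma collinear_convexHull_iff {s : Set E} : Collinear ℝ (convexHull ℝ s) ↔ Collinear ℝ s := by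
  rw [Collinear, Collinear, ← direction_affineSpan, affineSpan_convexHull, direction_affineSpan]

lemma Set.Finite.exists_convexHull_eq_segment {T : Set ℝ} (hT : T.Finite) (hne : T.Nonempty) :
    ∃ m ∈ T, ∃ M ∈ T, convexHull ℝ T = segment ℝ m M := by
  obtain ⟨m, hm, hmin⟩ := Set.exists_min_image T id hT hne
  obtain ⟨M, hM, hmax⟩ := Set.exists_max_image T id hT hne
  refine ⟨m, hm, M, hM, subset_antisymm (convexHull_min (fun t ht => ?_) (convex_segment m M))
    (segment_subset_convexHull hm hM)⟩
  rw [segment_eq_Icc (show m ≤ M from hmin M hM)]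
  exact ⟨hmin t ht, hmax t ht⟩

lemma Collinear.exists_convexHull_eq_segment {s : Set E} (hcol : Collinear ℝ s) (hfin : s.Finite)
    (hnt : s.Nontrivial) : ∃ p q, p ≠ q ∧ convexHull ℝ s = segment ℝ p q := by
  obtain ⟨x₀, hx₀⟩ := hnt.nonempty
  obtain ⟨d, hd⟩ := (collinear_iff_of_mem hx₀).mp hcol
  set f : ℝ →ᵃ[ℝ] E := AffineMap.lineMap x₀ (d +ᵥ x₀)
  have hsf : f '' (f ⁻¹' s) = s := Set.image_preimage_eq_of_subset fun x hx => by
    obtain ⟨r, rfl⟩ := hd x hx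
    exact ⟨r, by simp [f, AffineMap.lineMap_apply]⟩
  have hd0 : d ≠ 0 := by
    rintro rfl
    obtain ⟨x, hx, y, hy, hxy⟩ := hnt
    obtain ⟨r, rfl⟩ := hd x hx
    obtain ⟨r', rfl⟩ := hd y hy
    simp at hxy
  have hfinj : Function.Injective f :=
    AffineMap.lineMap_injective ℝ (by simpa [eq_comm (a := x₀)] using hd0)
  have hTne : (f ⁻¹' s).Nonempty := by
    rw [← hsf] at hx₀
    exact hx₀.elim fun r hr => ⟨r, hr.1⟩
  obtain ⟨m, -, M, -, hTseg⟩ := (hfin.preimage hfinj.injOn).exists_convexHull_eq_segment hTne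
  have hconv : convexHull ℝ s = segment ℝ (f m) (f M) := by
    rw [← hsf, ← AffineMap.image_convexHull, hTseg, image_segment]
  refine ⟨f m, f M, fun h => hnt.not_subset_singleton (x := f m) ?_, hconv⟩
  calc s ⊆ convexHull ℝ s := subset_convexHull ℝ s
    _ = {f m} := by rw [hconv, ← h, segment_same]

lemma setOf_isMinOn_convexHull (f : E →ₗ[ℝ] ℝ) {s : Set E} (hs : s.Finite) :
    {x ∈ convexHull ℝ s | ∀ y ∈ convexHull ℝ s, f x ≤ f y} =
      convexHull ℝ {x ∈ s | ∀ y ∈ s, f x ≤ f y} := by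
  rcases s.eq_empty_or_nonempty with rfl | hne
  · simp
  obtain ⟨z, hz, hzmin⟩ := Set.exists_min_image s f hs hne
  set S := {x ∈ s | ∀ y ∈ s, f x ≤ f y}
  have hSle : convexHull ℝ S ⊆ {x | f x ≤ f z} :=
    convexHull_min (fun x hx => hx.2 z hz) (convex_halfSpace_le f.isLinear _)
  have hge : convexHull ℝ s ⊆ {x | f z ≤ f x} :=
    convexHull_min hzmin (convex_halfSpace_ge f.isLinear _)
  apply subset_antisymm
  · rintro x ⟨hx, hxmin⟩
    rcases (s \ S).eq_empty_or_nonempty with h | h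
    · exact convexHull_mono (Set.sdiff_eq_empty.mp h) hx
    have hgt : convexHull ℝ (s \ S) ⊆ {x | f z < f x} := by
      refine convexHull_min (fun y hy => (hzmin y hy.1).lt_of_ne fun hzy => hy.2 ⟨hy.1, ?_⟩)
        (convex_halfSpace_gt f.isLinear _)
      exact fun w hw => hzy ▸ hzmin w hw
    rw [← Set.union_sdiff_cancel (Set.sep_subset s _), convexHull_union (s := S) ⟨z, hz, hzmin⟩ h,
      mem_convexJoin] at hx
    obtain ⟨a, ha, b, hb, t, u, ht, hu, htu, rfl⟩ := hx
    have hfa : f z ≤ f a := hge (convexHull_mono (Set.sep_subset _ _) ha)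
    have hfb : f z < f b := hgt hb
    have hxz : f (t • a + u • b) ≤ f z := hxmin z (subset_convexHull ℝ s hz)
    rw [map_add, map_smul, map_smul, smul_eq_mul, smul_eq_mul] at hxz
    obtain rfl : u = 0 := by
      by_contra hu0
      have hsplit : t * f z + u * f z = f z := by rw [← add_mul, htu, one_mul]
      linarith [mul_le_mul_of_nonneg_left hfa ht, mul_lt_mul_of_pos_left hfb (hu.lt_of_ne' hu0)]
    obtain rfl : t = 1 := by linarith
    simpa using ha
  · intro x hx
    exact ⟨convexHull_mono (Set.sep_subset _ _) hx, fun y hy => (hSle hx).trans (hge hy)⟩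

end Convex

lemma collinear_of_sum_eq_of_weight_eq {v : Fin 3 → ℤ} (hv0 : v 0 = 0) (hv : v ≠ 0)
    {t : Set (Fin 3 → ℝ)} {s m : ℝ}
    (ht : ∀ x ∈ t, ∑ i, x i = s ∧ ∑ i, (v i : ℝ) * x i = m) : Collinear ℝ t := by
  rcases t.eq_empty_or_nonempty with rfl | ⟨x₀, hx₀⟩
  · exact collinear_empty ℝ _
  have hv12 : (v 1 : ℝ) ≠ 0 ∨ (v 2 : ℝ) ≠ 0 := by
    by_contra! h
    apply hv
    ext i
    fin_cases i <;> simp_all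
  rw [collinear_iff_of_mem hx₀]
  -- the cross product `(1, 1, 1) × v`
  refine ⟨![v 2 - v 1, -v 2, v 1], fun x hx => ?_⟩
  obtain ⟨hs₀, hm₀⟩ := ht x₀ hx₀
  obtain ⟨hs, hm⟩ := ht x hx
  simp only [Fin.sum_univ_three, hv0, Int.cast_zero, zero_mul, zero_add] at hs₀ hm₀ hs hm
  rcases hv12 with h1 | h2
  · refine ⟨(x 2 - x₀ 2) / v 1, ?_⟩
    ext i
    fin_cases i <;> simp <;> field_simp
    · linear_combination (v 1 : ℝ) * (hs - hs₀) - (hm - hm₀)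
    · linear_combination hm - hm₀
    · ring
  · refine ⟨-(x 1 - x₀ 1) / v 2, ?_⟩
    ext i
    fin_cases i <;> simp <;> field_simp
    · linear_combination (v 2 : ℝ) * (hs - hs₀) - (hm - hm₀)
    · ring
    · linear_combination hm - hm₀

def expPt (α : Fin 3 →₀ ℕ) : Fin 3 → ℝ := fun i => α i

lemma newtonPolytope3_eq_convexHull (F : MvPolynomial (Fin 3) ℂ) :
    newtonPolytope3 F = convexHull ℝ (expPt '' F.support) :=
  rfl

lemma expPt_injective : Function.Injective expPt :=
  fun α β h => Finsupp.ext fun i => by simpa [expPt] using congrFun h i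

lemma sum_mul_expPt (v : Fin 3 → ℤ) (α : Fin 3 →₀ ℕ) :
    ∑ i, (v i : ℝ) * expPt α i = zwdeg v α := by
  simp [zwdeg, expPt]

lemma sum_apply_of_mem_support {F : MvPolynomial (Fin 3) ℂ} {n : ℕ} (hF : F.IsHomogeneous n)
    {α : Fin 3 →₀ ℕ} (hα : α ∈ F.support) : ∑ i, α i = n := by
  rw [hF.degree_eq_sum_deg_support hα]
  exact (Finset.sum_subset (Finset.subset_univ α.support) (by simp)).symm

lemma collinear_expPt_image {F : MvPolynomial (Fin 3) ℂ} {v : Fin 3 → ℤ} (hv0 : v 0 = 0)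
    (hv : v ≠ 0) {n : ℕ} (hF : F.IsHomogeneous n) {m : ℤ}
    (hm : ∀ α ∈ F.support, zwdeg v α = m) : Collinear ℝ (expPt '' F.support) := by
  refine collinear_of_sum_eq_of_weight_eq hv0 hv (s := n) (m := m) ?_
  rintro _ ⟨α, hα, rfl⟩
  rw [sum_mul_expPt, hm α hα]
  simp [expPt, ← sum_apply_of_mem_support hF hα]

lemma faceOf_newtonPolytope3 (v : Fin 3 → ℤ) (F : MvPolynomial (Fin 3) ℂ) :
    faceOf v (newtonPolytope3 F) = newtonPolytope3 (pInit v F) := by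
  let f : (Fin 3 → ℝ) →ₗ[ℝ] ℝ := ∑ i, (v i : ℝ) • LinearMap.proj i
  have hf : ∀ x, f x = ∑ i, (v i : ℝ) * x i := fun x => by simp [f]
  have := setOf_isMinOn_convexHull f (F.support.finite_toSet.image expPt)
  simp only [hf] at this
  rw [faceOf, newtonPolytope3_eq_convexHull, newtonPolytope3_eq_convexHull, this]
  congr 1
  ext x
  constructor
  · rintro ⟨⟨α, hα, rfl⟩, hmin⟩
    refine ⟨α, mem_support_pInit.mpr ⟨hα, fun β hβ => ?_⟩, rfl⟩
    have := hmin _ ⟨β, hβ, rfl⟩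
    rw [sum_mul_expPt, sum_mul_expPt] at this
    exact_mod_cast this
  · rintro ⟨α, hα, rfl⟩
    obtain ⟨hαF, hmin⟩ := mem_support_pInit.mp hα
    refine ⟨⟨α, hαF, rfl⟩, ?_⟩
    rintro _ ⟨β, hβ, rfl⟩
    rw [sum_mul_expPt, sum_mul_expPt]
    exact_mod_cast hmin β hβ

lemma exists_faceOf_newtonPolytope3_eq_segment {F : MvPolynomial (Fin 3) ℂ} {v : Fin 3 → ℤ}
    (hv0 : v 0 = 0) (hv : v ≠ 0) {n : ℕ} (hF : F.IsHomogeneous n)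
    (hnm : ¬ IsMonP3 (pInit v F)) :
    ∃ p q, p ≠ q ∧ faceOf v (newtonPolytope3 F) = segment ℝ p q := by
  have hF0 : F ≠ 0 := by rintro rfl; exact hnm ⟨0, 0, by simp [pInit]⟩
  obtain ⟨d, hd, -, -⟩ := exists_weight_pInit (v := v) hF0
  obtain ⟨α, hα, β, hβ, hαβ⟩ := not_isMonP3_iff.mp hnm
  rw [faceOf_newtonPolytope3, newtonPolytope3_eq_convexHull]
  refine (collinear_expPt_image hv0 hv (isHomogeneous_pInit hF) hd).exists_convexHull_eq_segment
    ((pInit v F).support.finite_toSet.image expPt) ⟨expPt α, ⟨α, hα, rfl⟩, expPt β, ⟨β, hβ, rfl⟩,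
      expPt_injective.ne hαβ⟩

section Pencil

variable {X : Type*} (T : Finset X) (la lb : X → ℤ)

lemma exists_tilt_of_lt {α₀ : X} (hmin : ∀ γ ∈ T, la α₀ ≤ la γ) {t : X}
    (ht : t ∈ T) (hlt : lb t < lb α₀) :
    ∃ D E : ℤ, 0 < D ∧ ∃ β ∈ T, β ≠ α₀ ∧ D * la β + E * lb β = D * la α₀ + E * lb α₀ ∧
      ∀ γ ∈ T, D * la α₀ + E * lb α₀ ≤ D * la γ + E * lb γ := by
  classical
  -- Turn `la` towards `lb` until a first point of smaller `lb` ties with `α₀`: that point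
  -- minimises the slope below.
  obtain ⟨β, hβ, hβmin⟩ := (T.filter fun γ => lb γ < lb α₀).exists_min_image
    (fun γ => ((la γ - la α₀ : ℤ) : ℚ) / (lb α₀ - lb γ : ℤ)) ⟨t, Finset.mem_filter.mpr ⟨ht, hlt⟩⟩
  obtain ⟨hβT, hβlt⟩ := Finset.mem_filter.mp hβ
  refine ⟨lb α₀ - lb β, la β - la α₀, by omega, β, hβT, fun h => by simp [h] at hβlt, by ring,
    fun γ hγ => ?_⟩
  by_cases hγlt : lb γ < lb α₀
  · have h := hβmin γ (Finset.mem_filter.mpr ⟨hγ, hγlt⟩)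
    rw [div_le_div_iff₀ (by exact_mod_cast sub_pos.mpr hβlt) (by exact_mod_cast sub_pos.mpr hγlt)]
      at h
    have h' : (la β - la α₀) * (lb α₀ - lb γ) ≤ (la γ - la α₀) * (lb α₀ - lb β) := by
      exact_mod_cast h
    linarith
  · nlinarith [mul_nonneg (sub_nonneg.mpr hβlt.le) (sub_nonneg.mpr (hmin γ hγ)),
      mul_nonpos_of_nonneg_of_nonpos (sub_nonneg.mpr (hmin β hβT))
        (sub_nonpos.mpr (not_lt.mp hγlt))]

lemma exists_two_minimizers (h : ∃ α ∈ T, ∃ β ∈ T, lb α ≠ lb β) :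
    ∃ D E : ℤ, 0 < D ∧ ∃ α ∈ T, ∃ β ∈ T, α ≠ β ∧ ∀ γ ∈ T,
      D * la α + E * lb α ≤ D * la γ + E * lb γ ∧ D * la β + E * lb β ≤ D * la γ + E * lb γ := by
  obtain ⟨α, hα, β, hβ, hne⟩ := h
  obtain ⟨α₀, hα₀, hmin⟩ := T.exists_min_image la ⟨α, hα⟩
  obtain ⟨t, ht, hlt⟩ : ∃ t ∈ T, lb t ≠ lb α₀ := by
    by_contra! h'
    exact hne ((h' α hα).trans (h' β hβ).symm)
  rcases hlt.lt_or_gt with hlt | hgt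
  · obtain ⟨D, E, hD, β, hβ, hβα, heq, hle⟩ := exists_tilt_of_lt T la lb hmin ht hlt
    exact ⟨D, E, hD, α₀, hα₀, β, hβ, hβα.symm, fun γ hγ => ⟨hle γ hγ, heq ▸ hle γ hγ⟩⟩
  · obtain ⟨D, E, hD, β, hβ, hβα, heq, hle⟩ :=
      exists_tilt_of_lt T la (-lb) hmin ht (neg_lt_neg hgt)
    refine ⟨D, -E, hD, α₀, hα₀, β, hβ, hβα.symm, fun γ hγ => ?_⟩
    simp only [Pi.neg_apply] at heq hle
    have := hle γ hγ
    constructor <;> linarith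

end Pencil

def perpWeight (γ : Fin 3 →₀ ℕ) : Fin 3 → ℤ := ![0, -(γ 2 : ℤ), γ 1]

lemma zwdeg_perpWeight (γ δ : Fin 3 →₀ ℕ) :
    zwdeg (perpWeight γ) δ = γ 1 * δ 2 - γ 2 * δ 1 := by
  simp [zwdeg, perpWeight, Fin.sum_univ_three]
  ring

lemma exists_mem_support_zwdeg_perpWeight_ne {F G P : MvPolynomial (Fin 3) ℂ} {n m : ℕ}
    (hF : F.IsHomogeneous n) (hdim : ¬ Collinear ℝ (newtonPolytope3 F))
    (hsupp : ∀ δ ∈ F.support, δ ∈ G.support ∨ δ 1 = 0 ∧ δ 2 = 0) (hP : P.IsHomogeneous m)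
    {α β : Fin 3 →₀ ℕ} (hα : α ∈ P.support) (hβ : β ∈ P.support) (hαβ : α ≠ β) :
    ∃ γ ∈ G.support, zwdeg (perpWeight γ) α ≠ zwdeg (perpWeight γ) β := by
  by_contra! h
  have hw : perpWeight α - perpWeight β ≠ 0 := fun hw => hαβ <| by
    have h1 := congrFun hw 1
    have h2 := congrFun hw 2
    have hsum := (sum_apply_of_mem_support hP hα).trans (sum_apply_of_mem_support hP hβ).symm
    simp only [Fin.sum_univ_three] at hsum
    simp [perpWeight] at h1 h2
    ext i
    fin_cases i <;> simp <;> omega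
  refine hdim (collinear_convexHull_iff.mpr
    (collinear_expPt_image (by simp [perpWeight]) hw hF (m := 0) fun δ hδ => ?_))
  rcases hsupp δ hδ with hδ | ⟨h1, h2⟩
  · have := h δ hδ
    simp only [zwdeg_perpWeight] at this
    simp only [zwdeg, Pi.sub_apply, perpWeight, Fin.sum_univ_three]
    simp
    linarith
  · simp [zwdeg, Fin.sum_univ_three, perpWeight, h1, h2]

lemma exists_weight_neg_not_isMonP3_pInit {P : MvPolynomial (Fin 3) ℂ} {γ : Fin 3 →₀ ℕ}
    (h : ∃ α ∈ P.support, ∃ β ∈ P.support, zwdeg (perpWeight γ) α ≠ zwdeg (perpWeight γ) β) :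
    ∃ v : Fin 3 → ℤ, v 0 = 0 ∧ zwdeg v γ < 0 ∧ ¬ IsMonP3 (pInit v P) := by
  have hγ : 0 < (γ 1 : ℤ) ^ 2 + (γ 2 : ℤ) ^ 2 := by
    obtain ⟨α, -, β, -, hne⟩ := h
    by_contra! h0
    have h1 : (γ 1 : ℤ) = 0 := by nlinarith
    have h2 : (γ 2 : ℤ) = 0 := by nlinarith
    simp [zwdeg_perpWeight, h1, h2] at hne
  set u : Fin 3 → ℤ := ![0, -(γ 1 : ℤ), -(γ 2 : ℤ)]
  obtain ⟨D, E, hD, α, hα, β, hβ, hαβ, hmin⟩ :=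
    exists_two_minimizers P.support (zwdeg u) (zwdeg (perpWeight γ)) h
  refine ⟨D • u + E • perpWeight γ, by simp [u, perpWeight], ?_,
    not_isMonP3_iff.mpr ⟨α, ?_, β, ?_, hαβ⟩⟩
  · rw [zwdeg_smul_add_smul, zwdeg_perpWeight]
    simp only [u, zwdeg, Fin.sum_univ_three]
    simp
    nlinarith
  · exact mem_support_pInit.mpr ⟨hα, fun δ hδ => by
      simpa only [zwdeg_smul_add_smul] using (hmin δ hδ).1⟩
  · exact mem_support_pInit.mpr ⟨hβ, fun δ hδ => by
      simpa only [zwdeg_smul_add_smul] using (hmin δ hδ).2⟩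

theorem stmt_5_general (F P R : MvPolynomial (Fin 3) ℂ) (a : ℕ) (c : ℂ)
    (hF : F.IsHomogeneous a) (hP : ∃ dP, P.IsHomogeneous dP)
    (hPm : ¬ IsMonP3 P)
    (heq : F = P ^ 2 * R + MvPolynomial.C c * MvPolynomial.X 0 ^ a)
    (hdim : ¬ Collinear ℝ (newtonPolytope3 F)) :
    ∃ v : Fin 3 → ℤ, v ≠ 0 ∧
      (∃ p q : Fin 3 → ℝ, p ≠ q ∧ faceOf v (newtonPolytope3 F) = segment ℝ p q) ∧
      pInit v F = (pInit v P) ^ 2 * pInit v R ∧ ¬ IsMonP3 (pInit v P) := by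
  obtain ⟨dP, hP⟩ := hP
  obtain ⟨α, hα, β, hβ, hαβ⟩ := not_isMonP3_iff.mp hPm
  have hCX : C c * X 0 ^ a = monomial (Finsupp.single (0 : Fin 3) a) c := by
    rw [X_pow_eq_monomial, C_mul_monomial, mul_one]
  have hmon : ∀ δ ∈ (monomial (Finsupp.single (0 : Fin 3) a) c).support, δ 1 = 0 ∧ δ 2 = 0 :=
    fun δ hδ => by simp [Finset.mem_singleton.mp (support_monomial_subset hδ)]
  have hsupp : ∀ δ ∈ F.support, δ ∈ (P ^ 2 * R).support ∨ δ 1 = 0 ∧ δ 2 = 0 := fun δ hδ => by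
    rw [heq, hCX] at hδ
    exact (Finset.mem_union.mp (support_add hδ)).imp_right (hmon δ)
  obtain ⟨γ, hγ, hγαβ⟩ := exists_mem_support_zwdeg_perpWeight_ne hF hdim hsupp hP hα hβ hαβ
  obtain ⟨v, hv0, hvγ, hPv⟩ := exists_weight_neg_not_isMonP3_pInit ⟨α, hα, β, hβ, hγαβ⟩
  have hP0 : P ≠ 0 := by rintro rfl; simp at hα
  have hR0 : R ≠ 0 := by rintro rfl; simp at hγ
  have hinit : pInit v F = pInit v P ^ 2 * pInit v R := by
    rw [heq, hCX, pInit_add_of_lt (by simp [hP0, hR0]) fun δ hδ => ⟨γ, hγ, ?_⟩, pow_two,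
      mul_assoc, pInit_mul hP0 (mul_ne_zero hP0 hR0), pInit_mul hP0 hR0]
    · ring
    · simpa [zwdeg, Fin.sum_univ_three, hv0, hmon δ hδ] using hvγ
  have hv : v ≠ 0 := by rintro rfl; simp [zwdeg] at hvγ
  refine ⟨v, hv, exists_faceOf_newtonPolytope3_eq_segment hv0 hv hF ?_, hinit, hPv⟩
  rw [hinit, pow_two, mul_assoc]
  exact not_isMonP3_mul hPv (mul_ne_zero (pInit_ne_zero hP0) (pInit_ne_zero hR0))

theorem stmt_5 (F P R : MvPolynomial (Fin 3) ℂ) (a : ℕ) (ha : 0 < a) (c : ℂ)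
    (hF : F.IsHomogeneous a) (hP : ∃ dP, P.IsHomogeneous dP) (hR : ∃ dR, R.IsHomogeneous dR)
    (hPm : ¬ IsMonP3 P)
    (heq : F = P ^ 2 * R + MvPolynomial.C c * MvPolynomial.X 0 ^ a)
    (hdim : ¬ Collinear ℝ (newtonPolytope3 F)) :
    ∃ v : Fin 3 → ℤ, v ≠ 0 ∧
      (∃ p q : Fin 3 → ℝ, p ≠ q ∧ faceOf v (newtonPolytope3 F) = segment ℝ p q) ∧
      pInit v F = (pInit v P) ^ 2 * pInit v R ∧ ¬ IsMonP3 (pInit v P) :=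
  stmt_5_general F P R a c hF hP hPm heq hdim
end

section
/- Let g(x,y) = θ₁x^l + θ₂y^m + (higher-order terms in the sense that every other monomial x^a y^b in the support satisfies a/l + b/m > 1 or is in the region above the segment) be a convergent power series with θ₁, θ₂ ∈ ℂ*, l, m ≥ 1, g(0,0) = 0. Then there exists a parametrization (φ₁, φ₂) ∈ ℂ{t}² with φ₁ ≠ 0, φ₁(0) = φ₂(0) = 0, and g(φ₁(t), φ₂(t)) = 0 identically. -/
/-!
Substituting `x = tᵐ`, `y = tˡ W(t)` turns `g` into `t^(l m) (θ₁ + θ₂ Wᵐ + O(t))`, because every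
other monomial `xᵃ yᵇ` of `g` has weighted degree `a m + b l > l m`. Choose `W(0) = c` with
`θ₁ + θ₂ cᵐ = 0`. Since `θ₁ ≠ 0` we have `c ≠ 0`, so the derivative `θ₂ m cᵐ⁻¹` of the leading
term is invertible, and the remaining coefficients of `W` can be solved for one at a time, as in
Newton's method for a simple root.
-/

/-- Composition (substitution) `g ∘ Φ` of a power series in `n` variables with an `n`-tuple of
one-variable power series with zero constant term. -/
noncomputable def compPS {n : ℕ} (g : MvPowerSeries (Fin n) ℂ) (Φ : Fin n → PowerSeries ℂ) :
    PowerSeries ℂ :=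
  PowerSeries.mk fun m =>
    ∑ α ∈ Finset.Iic ((Finsupp.equivFunOnFinite.symm fun _ => m : Fin n →₀ ℕ)),
      MvPowerSeries.coeff α g * PowerSeries.coeff m (∏ i, (Φ i) ^ (α i))

open PowerSeries

namespace PowerSeries

variable {R : Type*} [CommRing R]

theorem X_pow_succ_dvd_pow_sub_pow_sub {W W' : R⟦X⟧} {c : R} {k : ℕ}
    (hW : constantCoeff W = c) (hW' : constantCoeff W' = c) (h : X ^ k ∣ W - W') (p : ℕ) :
    X ^ (k + 1) ∣ W ^ p - W' ^ p - C ((p : R) * c ^ (p - 1)) * (W - W') := by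
  have hS : X ∣ ∑ i ∈ Finset.range p, W ^ i * W' ^ (p - 1 - i) - C ((p : R) * c ^ (p - 1)) := by
    rw [X_dvd_iff, map_sub, map_sum, constantCoeff_C]
    simp only [map_mul, map_pow, hW, hW', ← pow_add]
    rw [Finset.sum_congr rfl fun i hi => by
      rw [Nat.add_sub_cancel' (by have := Finset.mem_range.1 hi; omega)]]
    simp
  rw [← geom_sum₂_mul, ← sub_mul, pow_succ]
  exact mul_comm (W - W') _ ▸ mul_dvd_mul h hS

-- Newton's method for `F W = 0`, where `F` agrees with `W ↦ d Xⁿ W` up to higher order terms: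
-- the `k`-th step adjusts the coefficient of `X^(k+1)` to kill that of `X^(n+k+1)` in `F W`.
noncomputable def newtonSeq (F : R⟦X⟧ → R⟦X⟧) (n : ℕ) (c : R) (d : Rˣ) : ℕ → R⟦X⟧
  | 0 => C c
  | k + 1 => newtonSeq F n c d k -
      C (↑d⁻¹ * coeff (n + k + 1) (F (newtonSeq F n c d k))) * X ^ (k + 1)

section Newton

variable {F : R⟦X⟧ → R⟦X⟧} {n : ℕ} {c : R} {d : Rˣ}

theorem constantCoeff_newtonSeq (k : ℕ) : constantCoeff (newtonSeq F n c d k) = c := by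
  induction k with
  | zero => simp [newtonSeq]
  | succ k ih => simp [newtonSeq, ih]

theorem coeff_newtonSeq_of_le {j k : ℕ} (hjk : j ≤ k) :
    coeff j (newtonSeq F n c d k) = coeff j (newtonSeq F n c d j) := by
  induction k, hjk using Nat.le_induction with
  | base => rfl
  | succ k hjk ih =>
    rw [newtonSeq, map_sub, coeff_C_mul_X_pow, if_neg (by omega), sub_zero, ih]

theorem X_pow_dvd_newtonSeq_sub_newtonSeq (k : ℕ) :
    X ^ (k + 1) ∣ newtonSeq F n c d (k + 1) - newtonSeq F n c d k := by
  rw [newtonSeq, sub_sub_cancel_left]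
  exact (dvd_mul_left _ _).neg_right

theorem X_pow_dvd_newtonSeq
    (hF₀ : X ^ (n + 1) ∣ F (C c))
    (hF : ∀ k W W', constantCoeff W = c → constantCoeff W' = c → X ^ k ∣ W - W' →
      X ^ (n + k + 1) ∣ F W - F W' - C (d : R) * X ^ n * (W - W')) (k : ℕ) :
    X ^ (n + k + 1) ∣ F (newtonSeq F n c d k) := by
  induction k with
  | zero => exact hF₀
  | succ k ih =>
    set P := newtonSeq F n c d k
    set a := coeff (n + k + 1) (F P)
    have hlin := hF (k + 1) (newtonSeq F n c d (k + 1)) P (constantCoeff_newtonSeq _)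
      (constantCoeff_newtonSeq _) (X_pow_dvd_newtonSeq_sub_newtonSeq _)
    have htail : X ^ (n + (k + 1) + 1) ∣ F P - C a * X ^ (n + k + 1) := by
      rw [X_pow_dvd_iff]
      intro j hj
      rw [map_sub, coeff_C_mul_X_pow]
      split_ifs with hja
      · rw [hja, sub_self]
      · rw [X_pow_dvd_iff.1 ih j (by omega), sub_zero]
    have hstep :
        C (d : R) * X ^ n * (newtonSeq F n c d (k + 1) - P) = -(C a * X ^ (n + k + 1)) := by
      rw [newtonSeq, sub_sub_cancel_left, mul_neg, mul_mul_mul_comm, ← map_mul,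
        Units.mul_inv_cancel_left, ← pow_add, add_assoc]
      rfl
    have hsplit := dvd_add hlin htail
    rw [hstep] at hsplit
    convert hsplit using 1
    ring

theorem exists_constantCoeff_eq_and_eq_zero
    (hF₀ : X ^ (n + 1) ∣ F (C c))
    (hF : ∀ k W W', constantCoeff W = c → constantCoeff W' = c → X ^ k ∣ W - W' →
      X ^ (n + k + 1) ∣ F W - F W' - C (d : R) * X ^ n * (W - W')) :
    ∃ U, constantCoeff U = c ∧ F U = 0 := by
  set U := mk fun j => coeff j (newtonSeq F n c d j)
  have hU : constantCoeff U = c := by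
    rw [← coeff_zero_eq_constantCoeff_apply, coeff_mk, coeff_zero_eq_constantCoeff_apply,
      constantCoeff_newtonSeq]
  have hconv (k : ℕ) : X ^ (k + 1) ∣ U - newtonSeq F n c d k := by
    rw [X_pow_dvd_iff]
    intro j hj
    rw [map_sub, coeff_mk, coeff_newtonSeq_of_le (Nat.le_of_lt_succ hj), sub_self]
  refine ⟨U, hU, ext fun N => ?_⟩
  set P := newtonSeq F n c d N
  have hlin :=
    hF N U P hU (constantCoeff_newtonSeq N) ((pow_dvd_pow X N.le_succ).trans (hconv N))
  have hcorr : X ^ (n + N + 1) ∣ F P + C (d : R) * X ^ n * (U - P) := by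
    refine dvd_add (X_pow_dvd_newtonSeq hF₀ hF N) ?_
    rw [add_assoc, pow_add]
    exact mul_dvd_mul (dvd_mul_left _ _) (hconv N)
  have hdvd := dvd_add hlin hcorr
  rw [sub_sub, sub_add_cancel] at hdvd
  rw [X_pow_dvd_iff.1 hdvd N (by omega), map_zero]

end Newton

end PowerSeries

theorem compPS_add {n : ℕ} (g₁ g₂ : MvPowerSeries (Fin n) ℂ) (Φ : Fin n → PowerSeries ℂ) :
    compPS (g₁ + g₂) Φ = compPS g₁ Φ + compPS g₂ Φ := by
  ext N
  simp only [compPS, coeff_mk, map_add, add_mul, Finset.sum_add_distrib]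

theorem compPS_monomial {n : ℕ} {Φ : Fin n → PowerSeries ℂ} (hΦ : ∀ i, constantCoeff (Φ i) = 0)
    (α : Fin n →₀ ℕ) (a : ℂ) :
    compPS (MvPowerSeries.monomial α a) Φ = C a * ∏ i, Φ i ^ α i := by
  ext N
  rw [compPS, coeff_mk, coeff_C_mul]
  simp only [MvPowerSeries.coeff_monomial, ite_mul, zero_mul, Finset.sum_ite_eq', Finset.mem_Iic]
  split_ifs with hα
  · rfl
  · obtain ⟨i, hi⟩ : ∃ i, N < α i := by
      simpa [Finsupp.le_def] using hα
    have hdvd : X ^ α i ∣ ∏ j, Φ j ^ α j :=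
      (pow_dvd_pow_of_dvd (X_dvd_iff.2 (hΦ i)) _).trans
        (Finset.dvd_prod_of_mem _ (Finset.mem_univ i))
    rw [X_pow_dvd_iff.1 hdvd N hi, mul_zero]

theorem prod_pow_X_pow_X_pow_mul (W : ℂ⟦X⟧) (l m : ℕ) (α : Fin 2 →₀ ℕ) :
    ∏ i, (![X ^ m, X ^ l * W] i) ^ α i = X ^ (α 0 * m + α 1 * l) * W ^ α 1 := by
  rw [Fin.prod_univ_two, Matrix.cons_val_zero, Matrix.cons_val_one, Matrix.cons_val_zero, mul_pow,
    ← pow_mul, ← pow_mul, pow_add]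
  ring

theorem coeff_compPS_X_pow_X_pow_mul (h : MvPowerSeries (Fin 2) ℂ) (W : ℂ⟦X⟧) (l m N : ℕ) :
    coeff N (compPS h ![X ^ m, X ^ l * W]) =
      ∑ α ∈ Finset.Iic (Finsupp.equivFunOnFinite.symm fun _ => N : Fin 2 →₀ ℕ),
        MvPowerSeries.coeff α h * coeff N (X ^ (α 0 * m + α 1 * l) * W ^ α 1) := by
  simp only [compPS, coeff_mk, prod_pow_X_pow_X_pow_mul]

theorem X_pow_dvd_compPS {h : MvPowerSeries (Fin 2) ℂ} {l m n : ℕ}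
    (hh : ∀ α, MvPowerSeries.coeff α h ≠ 0 → n < α 0 * m + α 1 * l) (W : ℂ⟦X⟧) :
    X ^ (n + 1) ∣ compPS h ![X ^ m, X ^ l * W] := by
  rw [X_pow_dvd_iff]
  intro N hN
  rw [coeff_compPS_X_pow_X_pow_mul]
  refine Finset.sum_eq_zero fun α _ => ?_
  by_cases hα : MvPowerSeries.coeff α h = 0
  · rw [hα, zero_mul]
  · rw [coeff_X_pow_mul', if_neg (by have := hh α hα; omega), mul_zero]

theorem X_pow_dvd_compPS_sub {h : MvPowerSeries (Fin 2) ℂ} {l m n : ℕ}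
    (hh : ∀ α, MvPowerSeries.coeff α h ≠ 0 → n < α 0 * m + α 1 * l) {k : ℕ} {W W' : ℂ⟦X⟧}
    (hW : X ^ k ∣ W - W') :
    X ^ (n + k + 1) ∣ compPS h ![X ^ m, X ^ l * W] - compPS h ![X ^ m, X ^ l * W'] := by
  rw [X_pow_dvd_iff]
  intro N hN
  rw [map_sub, coeff_compPS_X_pow_X_pow_mul, coeff_compPS_X_pow_X_pow_mul,
    ← Finset.sum_sub_distrib]
  refine Finset.sum_eq_zero fun α _ => ?_
  by_cases hα : MvPowerSeries.coeff α h = 0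
  · rw [hα, zero_mul, zero_mul, sub_zero]
  · have hdvd :
        X ^ (α 0 * m + α 1 * l + k) ∣ X ^ (α 0 * m + α 1 * l) * (W ^ α 1 - W' ^ α 1) := by
      rw [pow_add]
      exact mul_dvd_mul_left _ (hW.trans (sub_dvd_pow_sub_pow _ _ _))
    rw [← mul_sub, ← map_sub, ← mul_sub, X_pow_dvd_iff.1 hdvd N (by have := hh α hα; omega),
      mul_zero]

-- `x` has weight `m` and `y` weight `l`, so that `θ₁ xˡ` and `θ₂ yᵐ` both have weight `l m`.
noncomputable def initialForm (θ₁ θ₂ : ℂ) (l m : ℕ) : MvPowerSeries (Fin 2) ℂ :=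
  MvPowerSeries.monomial (Finsupp.single 0 l) θ₁ + MvPowerSeries.monomial (Finsupp.single 1 m) θ₂

section InitialForm

variable {g : MvPowerSeries (Fin 2) ℂ} {θ₁ θ₂ c : ℂ} {l m : ℕ}

theorem compPS_initialForm (hl : 1 ≤ l) (hm : 1 ≤ m) (W : ℂ⟦X⟧) :
    compPS (initialForm θ₁ θ₂ l m) ![X ^ m, X ^ l * W] = X ^ (l * m) * (C θ₁ + C θ₂ * W ^ m) := by
  have hΦ : ∀ i, constantCoeff (![X ^ m, X ^ l * W] i) = 0 := by
    simp [Fin.forall_fin_two, zero_pow (by omega : m ≠ 0), zero_pow (by omega : l ≠ 0)]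
  rw [initialForm, compPS_add, compPS_monomial hΦ, compPS_monomial hΦ, prod_pow_X_pow_X_pow_mul,
    prod_pow_X_pow_X_pow_mul]
  simp only [Finsupp.single_eq_same, Finsupp.single_eq_of_ne (show (0 : Fin 2) ≠ 1 by decide),
    Finsupp.single_eq_of_ne (show (1 : Fin 2) ≠ 0 by decide)]
  ring

theorem lt_weight_of_coeff_sub_initialForm_ne_zero (hl : 1 ≤ l)
    (h1 : MvPowerSeries.coeff (Finsupp.single 0 l) g = θ₁)
    (h2 : MvPowerSeries.coeff (Finsupp.single 1 m) g = θ₂)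
    (hhot : ∀ α : Fin 2 →₀ ℕ, MvPowerSeries.coeff α g ≠ 0 →
      α ≠ Finsupp.single 0 l → α ≠ Finsupp.single 1 m → l * m < α 0 * m + α 1 * l)
    (α : Fin 2 →₀ ℕ) (hα : MvPowerSeries.coeff α (g - initialForm θ₁ θ₂ l m) ≠ 0) :
    l * m < α 0 * m + α 1 * l := by
  have hne : Finsupp.single (0 : Fin 2) l ≠ Finsupp.single 1 m := by
    intro h
    have := DFunLike.congr_fun h 0
    rw [Finsupp.single_eq_same, Finsupp.single_eq_of_ne (by decide)] at this
    omega
  by_cases ha : α = Finsupp.single 0 l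
  · simp [ha, initialForm, MvPowerSeries.coeff_monomial, h1, hne] at hα
  by_cases hb : α = Finsupp.single 1 m
  · simp [hb, initialForm, MvPowerSeries.coeff_monomial, h2, hne.symm] at hα
  refine hhot α ?_ ha hb
  simpa [initialForm, MvPowerSeries.coeff_monomial, ha, hb] using hα

theorem X_pow_dvd_compPS_of_initialForm (hl : 1 ≤ l) (hm : 1 ≤ m)
    (hh : ∀ α, MvPowerSeries.coeff α (g - initialForm θ₁ θ₂ l m) ≠ 0 → l * m < α 0 * m + α 1 * l)
    (hc : θ₁ + θ₂ * c ^ m = 0) {W : ℂ⟦X⟧} (hW : constantCoeff W = c) :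
    X ^ (l * m + 1) ∣ compPS g ![X ^ m, X ^ l * W] := by
  rw [← add_sub_cancel (initialForm θ₁ θ₂ l m) g, compPS_add, compPS_initialForm hl hm]
  refine dvd_add ?_ (X_pow_dvd_compPS hh W)
  rw [pow_succ]
  refine mul_dvd_mul_left _ (X_dvd_iff.2 ?_)
  simp [hW, hc]

theorem X_pow_dvd_compPS_sub_compPS_sub (hl : 1 ≤ l) (hm : 1 ≤ m)
    (hh : ∀ α, MvPowerSeries.coeff α (g - initialForm θ₁ θ₂ l m) ≠ 0 → l * m < α 0 * m + α 1 * l)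
    {k : ℕ} {W W' : ℂ⟦X⟧} (hW : constantCoeff W = c) (hW' : constantCoeff W' = c)
    (hk : X ^ k ∣ W - W') :
    X ^ (l * m + k + 1) ∣ compPS g ![X ^ m, X ^ l * W] - compPS g ![X ^ m, X ^ l * W'] -
      C (θ₂ * m * c ^ (m - 1)) * X ^ (l * m) * (W - W') := by
  set H := fun V : ℂ⟦X⟧ => compPS (g - initialForm θ₁ θ₂ l m) ![X ^ m, X ^ l * V]
  have hsplit : compPS g ![X ^ m, X ^ l * W] - compPS g ![X ^ m, X ^ l * W'] -
      C (θ₂ * m * c ^ (m - 1)) * X ^ (l * m) * (W - W') =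
      X ^ (l * m) * (C θ₂ * (W ^ m - W' ^ m - C ((m : ℂ) * c ^ (m - 1)) * (W - W'))) +
        (H W - H W') := by
    rw [← add_sub_cancel (initialForm θ₁ θ₂ l m) g, compPS_add, compPS_add,
      compPS_initialForm hl hm, compPS_initialForm hl hm]
    simp only [H, map_mul]
    ring
  rw [hsplit]
  refine dvd_add ?_ (X_pow_dvd_compPS_sub hh hk)
  rw [add_assoc, pow_add]
  exact mul_dvd_mul_left _ ((X_pow_succ_dvd_pow_sub_pow_sub hW hW' hk m).mul_left _)

end InitialForm

/-- Newton–Puiseux: a power series `g(x,y)` whose Newton polygon lies on or above the segment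
from `(l,0)` to `(0,m)`, with nonzero coefficients `θ₁` at `x^l` and `θ₂` at `y^m`, admits a
nontrivial parametrized zero branch `(φ₁, φ₂)` through the origin with `φ₁ ≠ 0`. -/
theorem stmt_15 (g : MvPowerSeries (Fin 2) ℂ) (θ₁ θ₂ : ℂ) (hθ₁ : θ₁ ≠ 0) (hθ₂ : θ₂ ≠ 0)
    (l m : ℕ) (hl : 1 ≤ l) (hm : 1 ≤ m)
    (h1 : MvPowerSeries.coeff (Finsupp.single 0 l) g = θ₁)
    (h2 : MvPowerSeries.coeff (Finsupp.single 1 m) g = θ₂)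
    (hhot : ∀ α : Fin 2 →₀ ℕ, MvPowerSeries.coeff α g ≠ 0 →
      α ≠ Finsupp.single 0 l → α ≠ Finsupp.single 1 m → l * m < α 0 * m + α 1 * l) :
    ∃ φ₁ φ₂ : PowerSeries ℂ, φ₁ ≠ 0 ∧
      PowerSeries.constantCoeff φ₁ = 0 ∧ PowerSeries.constantCoeff φ₂ = 0 ∧
      compPS g ![φ₁, φ₂] = 0 := by
  obtain ⟨c, hc⟩ := IsAlgClosed.exists_pow_nat_eq (-θ₁ / θ₂) (by omega : 0 < m)
  have hroot : θ₁ + θ₂ * c ^ m = 0 := by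
    rw [hc]
    field_simp
    ring
  have hc0 : c ≠ 0 := by
    rintro rfl
    simp [zero_pow (by omega : m ≠ 0), hθ₁] at hroot
  have hd : θ₂ * m * c ^ (m - 1) ≠ 0 :=
    mul_ne_zero (mul_ne_zero hθ₂ (Nat.cast_ne_zero.2 (by omega))) (pow_ne_zero _ hc0)
  have hh := lt_weight_of_coeff_sub_initialForm_ne_zero hl h1 h2 hhot
  obtain ⟨U, -, hU⟩ := exists_constantCoeff_eq_and_eq_zero (n := l * m) (d := Units.mk0 _ hd)
    (X_pow_dvd_compPS_of_initialForm hl hm hh hroot (constantCoeff_C c))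
    (fun k W W' hW hW' hk => X_pow_dvd_compPS_sub_compPS_sub hl hm hh hW hW' hk)
  refine ⟨X ^ m, X ^ l * U, pow_ne_zero _ X_ne_zero, ?_, ?_, hU⟩
  · rw [map_pow, constantCoeff_X, zero_pow (by omega)]
  · rw [map_mul, map_pow, constantCoeff_X, zero_pow (by omega), zero_mul]
end
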